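/- arXiv:1403.4675 — 11 statements merged into one kernel-verified Lean document; each statement's English description precedes it below -/
import Mathlib

section
/- Let F be an invertible real 3×3 matrix whose singular values λ₁ > λ₂ > λ₃ > 0 are pairwise distinct (equivalently, the eigenvalues of FᵀF are λ₁² > λ₂² > λ₃²). Then there exists a two-dimensional linear subspace E of ℝ³ such that ‖F x‖ = ‖x‖ for all x ∈ E (a plane of no distortion) if and only if λ₂ = 1. -/
open Matrix Module
open scoped RealInnerProductSpace

/-!
In coordinates `y = Q x` one has `‖F x‖² - ‖x‖² = ∑ (λᵢ² - 1) yᵢ²`, so a plane of no distortion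
is a plane on which this quadratic form vanishes. The form is `≥ (λ₂² - 1) ‖x‖²` on the plane
`y₃ = 0` and `≤ (λ₂² - 1) ‖x‖²` on the plane `y₁ = 0`; both planes meet every other plane of
`ℝ³` in a nonzero vector, which forces `λ₂ = 1`. Conversely, if `λ₂ = 1` the form is
`(λ₁² - 1) y₁² - (1 - λ₃²) y₃²`, which vanishes on the plane `√(λ₁² - 1) y₁ = √(1 - λ₃²) y₃`.
-/

theorem Submodule.exists_ne_zero_mem_inf_of_finrank_lt_add {K V : Type*} [DivisionRing K]
    [AddCommGroup V] [Module K V] [FiniteDimensional K V] {E P : Submodule K V}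
    (h : finrank K V < finrank K E + finrank K P) : ∃ x ∈ E, x ∈ P ∧ x ≠ 0 := by
  have hinf : 0 < finrank K ↥(E ⊓ P) := by
    have := Submodule.finrank_sup_add_finrank_inf_eq E P
    have := Submodule.finrank_le (E ⊔ P)
    omega
  obtain ⟨x, hx, hx0⟩ :=
    Submodule.exists_mem_ne_zero_of_ne_bot (Submodule.one_le_finrank_iff.mp hinf)
  exact ⟨x, hx.1, hx.2, hx0⟩

theorem finrank_orthogonal_span_singleton_of_finrank_eq {V : Type*} [NormedAddCommGroup V]
    [InnerProductSpace ℝ V] {n : ℕ} (hV : finrank ℝ V = n + 1) {v : V} (hv : v ≠ 0) :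
    finrank ℝ (ℝ ∙ v)ᗮ = n :=
  haveI : Fact (finrank ℝ V = n + 1) := ⟨hV⟩
  Submodule.finrank_orthogonal_span_singleton hv

theorem nonpos_of_eq_zero_on_of_mul_norm_sq_le_on {V : Type*} [NormedAddCommGroup V]
    [InnerProductSpace ℝ V] [FiniteDimensional ℝ V] {f : V → ℝ} {c : ℝ} {E P : Submodule ℝ V}
    (hdim : finrank ℝ V < finrank ℝ E + finrank ℝ P) (hE : ∀ x ∈ E, f x = 0)
    (hP : ∀ x ∈ P, c * ‖x‖ ^ 2 ≤ f x) : c ≤ 0 := by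
  obtain ⟨x, hxE, hxP, hx0⟩ := Submodule.exists_ne_zero_mem_inf_of_finrank_lt_add hdim
  have hcx := hP x hxP
  rw [hE x hxE] at hcx
  exact nonpos_of_mul_nonpos_left hcx (by positivity)

namespace OrthonormalBasis

variable {ι V : Type*} [Fintype ι] [NormedAddCommGroup V] [InnerProductSpace ℝ V]

theorem mul_norm_sq_le_sum_mul_inner_sq (b : OrthonormalBasis ι ℝ V) {c : ι → ℝ} {m : ℝ}
    {x : V} (h : ∀ i, ⟪b i, x⟫ ≠ 0 → m ≤ c i) : m * ‖x‖ ^ 2 ≤ ∑ i, c i * ⟪b i, x⟫ ^ 2 := by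
  rw [← b.sum_sq_inner_right, Finset.mul_sum]
  refine Finset.sum_le_sum fun i _ => ?_
  by_cases hi : ⟪b i, x⟫ = 0
  · simp [hi]
  · exact mul_le_mul_of_nonneg_right (h i hi) (sq_nonneg _)

theorem finrank_eq_three (b : OrthonormalBasis (Fin 3) ℝ V) : finrank ℝ V = 2 + 1 := by
  simpa using finrank_eq_card_basis b.toBasis

theorem eq_zero_of_sum_mul_inner_sq_eq_zero_on (b : OrthonormalBasis (Fin 3) ℝ V)
    {c : Fin 3 → ℝ} (h01 : c 1 ≤ c 0) (h12 : c 2 ≤ c 1) {E : Submodule ℝ V}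
    (hE : finrank ℝ E = 2) (hc : ∀ x ∈ E, ∑ i, c i * ⟪b i, x⟫ ^ 2 = 0) : c 1 = 0 := by
  have : FiniteDimensional ℝ V := b.toBasis.finiteDimensional_of_finite
  have hdim (j : Fin 3) : finrank ℝ V < finrank ℝ E + finrank ℝ (ℝ ∙ b j)ᗮ := by
    rw [hE, finrank_orthogonal_span_singleton_of_finrank_eq b.finrank_eq_three
      (b.orthonormal.ne_zero j), b.finrank_eq_three]
    norm_num
  apply le_antisymm
  · refine nonpos_of_eq_zero_on_of_mul_norm_sq_le_on (hdim 2) hc fun x hx => ?_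
    refine b.mul_norm_sq_le_sum_mul_inner_sq fun i hi => ?_
    rw [Submodule.mem_orthogonal_singleton_iff_inner_right] at hx
    fin_cases i <;> simp_all
  · have hc' : ∀ x ∈ E, ∑ i, -c i * ⟪b i, x⟫ ^ 2 = 0 := fun x hx => by
      simp [neg_mul, hc x hx]
    refine neg_nonpos.mp (nonpos_of_eq_zero_on_of_mul_norm_sq_le_on (hdim 0) hc' fun x hx => ?_)
    refine b.mul_norm_sq_le_sum_mul_inner_sq fun i hi => ?_
    rw [Submodule.mem_orthogonal_singleton_iff_inner_right] at hx
    fin_cases i <;> simp_all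

theorem exists_finrank_eq_two_sum_mul_inner_sq_eq_zero (b : OrthonormalBasis (Fin 3) ℝ V)
    {c : Fin 3 → ℝ} (h0 : 0 < c 0) (h1 : c 1 = 0) (h2 : c 2 < 0) :
    ∃ E : Submodule ℝ V, finrank ℝ E = 2 ∧ ∀ x ∈ E, ∑ i, c i * ⟪b i, x⟫ ^ 2 = 0 := by
  set w := √(c 0) • b 0 - √(-c 2) • b 2
  have hw : w ≠ 0 := by
    intro hw
    have h := congrArg (⟪b 0, ·⟫) hw
    simp [w, inner_sub_right, real_inner_smul_right, b.inner_eq_ite] at h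
    linarith [Real.sqrt_pos.mpr h0]
  refine ⟨(ℝ ∙ w)ᗮ, finrank_orthogonal_span_singleton_of_finrank_eq b.finrank_eq_three hw,
    fun x hx => ?_⟩
  rw [Submodule.mem_orthogonal_singleton_iff_inner_right, inner_sub_left, real_inner_smul_left,
    real_inner_smul_left, sub_eq_zero] at hx
  have hsq := congrArg (· ^ 2) hx
  simp only [mul_pow, Real.sq_sqrt h0.le, Real.sq_sqrt (neg_nonneg.mpr h2.le)] at hsq
  simp only [Fin.sum_univ_three, h1]
  linear_combination hsq

theorem exists_finrank_eq_two_sum_mul_inner_sq_eq_zero_iff (b : OrthonormalBasis (Fin 3) ℝ V)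
    {c : Fin 3 → ℝ} (h01 : c 1 < c 0) (h12 : c 2 < c 1) :
    (∃ E : Submodule ℝ V, finrank ℝ E = 2 ∧ ∀ x ∈ E, ∑ i, c i * ⟪b i, x⟫ ^ 2 = 0) ↔ c 1 = 0 :=
  ⟨fun ⟨_, hE, hc⟩ => b.eq_zero_of_sum_mul_inner_sq_eq_zero_on h01.le h12.le hE hc,
    fun h1 => b.exists_finrank_eq_two_sum_mul_inner_sq_eq_zero (h1 ▸ h01) h1 (h1 ▸ h12)⟩

theorem exists_finrank_eq_two_norm_eq_iff (b : OrthonormalBasis (Fin 3) ℝ V) {T : V → V}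
    {d : Fin 3 → ℝ} (h01 : d 1 < d 0) (h12 : d 2 < d 1)
    (hT : ∀ x, ‖T x‖ ^ 2 = ∑ i, d i * ⟪b i, x⟫ ^ 2) :
    (∃ E : Submodule ℝ V, finrank ℝ E = 2 ∧ ∀ x ∈ E, ‖T x‖ = ‖x‖) ↔ d 1 = 1 := by
  have hiso (x : V) : ‖T x‖ = ‖x‖ ↔ ∑ i, (d i - 1) * ⟪b i, x⟫ ^ 2 = 0 := by
    simp only [sub_mul, one_mul, Finset.sum_sub_distrib, ← hT, b.sum_sq_inner_right, sub_eq_zero]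
    exact (pow_left_inj₀ (norm_nonneg _) (norm_nonneg _) two_ne_zero).symm
  simp only [hiso]
  rw [b.exists_finrank_eq_two_sum_mul_inner_sq_eq_zero_iff (by simpa) (by simpa), sub_eq_zero]

end OrthonormalBasis

theorem Matrix.exists_orthonormalBasis_inner_eq_mulVec {n : Type*} [Fintype n] [DecidableEq n]
    [Nonempty n] {Q : Matrix n n ℝ} (hQ : Q ∈ orthogonalGroup n ℝ) :
    ∃ b : OrthonormalBasis n ℝ (EuclideanSpace ℝ n), ∀ i x, ⟪b i, x⟫ = (Q *ᵥ x.ofLp) i := by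
  have hinner (i : n) (x : EuclideanSpace ℝ n) : ⟪WithLp.toLp 2 (Q i), x⟫ = (Q *ᵥ x.ofLp) i := by
    simp [EuclideanSpace.inner_eq_star_dotProduct, mulVec, dotProduct_comm]
  have hon : Orthonormal ℝ fun i => WithLp.toLp 2 (Q i) := by
    rw [orthonormal_iff_ite]
    intro i j
    rw [hinner]
    have hij := congrFun (congrFun ((mem_orthogonalGroup_iff n ℝ).mp hQ) i) j
    simpa [mulVec, Matrix.mul_apply, dotProduct, one_apply] using hij
  refine ⟨(basisOfOrthonormalOfCardEqFinrank hon (by simp)).toOrthonormalBasis (by simpa), ?_⟩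
  intro i x
  simp [hinner]

theorem Matrix.norm_toEuclideanLin_sq {m n : Type*} [Fintype m] [Fintype n] [DecidableEq n]
    (A : Matrix m n ℝ) (x : EuclideanSpace ℝ n) :
    ‖toEuclideanLin A x‖ ^ 2 = x.ofLp ⬝ᵥ (Aᵀ * A) *ᵥ x.ofLp := by
  rw [← real_inner_self_eq_norm_sq, EuclideanSpace.inner_eq_star_dotProduct]
  simp [← mulVec_mulVec, dotProduct_mulVec, vecMul_transpose, dotProduct_comm]

theorem Matrix.dotProduct_mulVec_conj_diagonal {n : Type*} [Fintype n] [DecidableEq n]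
    (Q : Matrix n n ℝ) (d : n → ℝ) (x : n → ℝ) :
    x ⬝ᵥ (Qᵀ * diagonal d * Q) *ᵥ x = ∑ i, d i * (Q *ᵥ x) i ^ 2 := by
  rw [← mulVec_mulVec, ← mulVec_mulVec, dotProduct_mulVec, vecMul_transpose]
  simp [dotProduct, mulVec_diagonal, sq, mul_left_comm]

theorem plane_of_no_distortion_iff_middle_singular_value_one_general
    (F : Matrix (Fin 3) (Fin 3) ℝ)
    (l1 l2 l3 : ℝ) (h12 : l2 < l1) (h23 : l3 < l2) (h3 : 0 < l3)
    (Q : Matrix (Fin 3) (Fin 3) ℝ) (hQ : Q ∈ Matrix.orthogonalGroup (Fin 3) ℝ)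
    (hsv : Fᵀ * F = Qᵀ * Matrix.diagonal ![l1 ^ 2, l2 ^ 2, l3 ^ 2] * Q) :
    (∃ E : Submodule ℝ (EuclideanSpace ℝ (Fin 3)),
        Module.finrank ℝ E = 2 ∧ ∀ x ∈ E, ‖Matrix.toEuclideanLin F x‖ = ‖x‖)
      ↔ l2 = 1 := by
  obtain ⟨b, hb⟩ := exists_orthonormalBasis_inner_eq_mulVec hQ
  have hF (x : EuclideanSpace ℝ (Fin 3)) :
      ‖toEuclideanLin F x‖ ^ 2 = ∑ i, ![l1 ^ 2, l2 ^ 2, l3 ^ 2] i * ⟪b i, x⟫ ^ 2 := by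
    simp only [norm_toEuclideanLin_sq, hsv, dotProduct_mulVec_conj_diagonal, hb]
  have hl12 : l2 ^ 2 < l1 ^ 2 := pow_lt_pow_left₀ h12 (h3.trans h23).le two_ne_zero
  have hl23 : l3 ^ 2 < l2 ^ 2 := pow_lt_pow_left₀ h23 h3.le two_ne_zero
  rw [b.exists_finrank_eq_two_norm_eq_iff (by simpa) (by simpa) hF]
  simpa using pow_eq_one_iff_of_nonneg (h3.trans h23).le two_ne_zero

/-- For an invertible real 3×3 matrix `F` with pairwise distinct singular
values `l1 > l2 > l3 > 0` (encoded via a spectral decomposition of `Fᵀ * F` with eigenvalues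
`l1² > l2² > l3²`), there exists a two-dimensional subspace `E` of `ℝ³` on which `F` preserves
Euclidean length (a plane of no distortion) if and only if `l2 = 1`. -/
theorem plane_of_no_distortion_iff_middle_singular_value_one
    (F : Matrix (Fin 3) (Fin 3) ℝ) (hF : IsUnit F)
    (l1 l2 l3 : ℝ) (h12 : l2 < l1) (h23 : l3 < l2) (h3 : 0 < l3)
    (Q : Matrix (Fin 3) (Fin 3) ℝ) (hQ : Q ∈ Matrix.orthogonalGroup (Fin 3) ℝ)
    (hsv : Fᵀ * F = Qᵀ * Matrix.diagonal ![l1 ^ 2, l2 ^ 2, l3 ^ 2] * Q) :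
    (∃ E : Submodule ℝ (EuclideanSpace ℝ (Fin 3)),
        Module.finrank ℝ E = 2 ∧ ∀ x ∈ E, ‖Matrix.toEuclideanLin F x‖ = ‖x‖)
      ↔ l2 = 1 :=
  plane_of_no_distortion_iff_middle_singular_value_one_general F l1 l2 l3 h12 h23 h3 Q hQ hsv
end

section
/- Let α > 1 and F = diag(α, 1/α, 1). Among the unit vectors x = (x₁, x₂, 0) ∈ ℝ³ orthogonal to the third coordinate axis, the cosine ⟨x, F x⟩ / ‖F x‖ of the angle between x and F x attains its minimum exactly at those x with x₂² = α² · x₁² (equivalently x₂² = α²/(1+α²)), and for every such minimizer one additionally has ‖F x‖ = ‖x‖ = 1. In other words, the directions of maximum tangential strain coincide with the initial directions of no distortion. -/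
/-!
Write `p = x₁²`, `q = x₂²`, so `p + q = 1`. The cosine is `(αp + α⁻¹q) / √(α²p + α⁻²q)`,
and its square exceeds `(2α/(1+α²))²` by `((α²-1)(α²p-q))² / ((1+α²)²(α⁴p+q))`.
Hence the minimum `2α/(1+α²)` is attained exactly when `q = α²p`, and then
`‖Fx‖² = α²p + α⁻²q = (α² + 1)p = 1`.
-/

open Matrix

theorem Matrix.toEuclideanLin_diagonal_apply {𝕜 n : Type*} [RCLike 𝕜] [Fintype n]
    [DecidableEq n] (d : n → 𝕜) (x : EuclideanSpace 𝕜 n) (i : n) :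
    toEuclideanLin (diagonal d) x i = d i * x i := by
  simp [toLpLin_apply, mulVec_diagonal]

theorem Matrix.real_inner_toEuclideanLin_diagonal {n : Type*} [Fintype n] [DecidableEq n]
    (d : n → ℝ) (x : EuclideanSpace ℝ n) :
    inner ℝ x (toEuclideanLin (diagonal d) x) = ∑ i, d i * x i ^ 2 := by
  simp only [PiLp.inner_apply, toEuclideanLin_diagonal_apply, RCLike.inner_apply, conj_trivial]
  exact Finset.sum_congr rfl fun i _ => by ring

theorem Matrix.norm_toEuclideanLin_diagonal {n : Type*} [Fintype n] [DecidableEq n]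
    (d : n → ℝ) (x : EuclideanSpace ℝ n) :
    ‖toEuclideanLin (diagonal d) x‖ = √(∑ i, d i ^ 2 * x i ^ 2) := by
  simp [EuclideanSpace.norm_eq, toEuclideanLin_diagonal_apply, mul_pow]

noncomputable def strainCos (α p q : ℝ) : ℝ :=
  (α * p + α⁻¹ * q) / √(α ^ 2 * p + α⁻¹ ^ 2 * q)

section
variable {α p q : ℝ}

theorem pow_four_mul_add_pos (hα : α ≠ 0) (hp : 0 ≤ p) (hq : 0 ≤ q) (hpq : p + q = 1) :
    0 < α ^ 4 * p + q := by
  rcases hp.eq_or_lt with rfl | hp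
  · linarith
  · positivity

theorem strainCos_sq_sub_sq (hα : 0 < α) (hp : 0 ≤ p) (hq : 0 ≤ q) (hpq : p + q = 1) :
    strainCos α p q ^ 2 - (2 * α / (1 + α ^ 2)) ^ 2 =
      ((α ^ 2 - 1) * (α ^ 2 * p - q)) ^ 2 / ((1 + α ^ 2) ^ 2 * (α ^ 4 * p + q)) := by
  have hD := pow_four_mul_add_pos hα.ne' hp hq hpq
  have hnum : α * p + α⁻¹ * q = (α ^ 2 * p + q) / α := by field_simp
  have hden : α ^ 2 * p + α⁻¹ ^ 2 * q = (α ^ 4 * p + q) / α ^ 2 := by field_simp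
  rw [strainCos, hnum, hden, div_pow, Real.sq_sqrt (by positivity)]
  field_simp
  obtain rfl : q = 1 - p := by linarith
  ring

theorem strainCos_nonneg (hα : 0 < α) (hp : 0 ≤ p) (hq : 0 ≤ q) : 0 ≤ strainCos α p q := by
  unfold strainCos
  positivity

theorem two_mul_div_one_add_sq_le_strainCos (hα : 0 < α) (hp : 0 ≤ p) (hq : 0 ≤ q)
    (hpq : p + q = 1) : 2 * α / (1 + α ^ 2) ≤ strainCos α p q := by
  rw [← pow_le_pow_iff_left₀ (by positivity) (strainCos_nonneg hα hp hq) two_ne_zero,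
    ← sub_nonneg, strainCos_sq_sub_sq hα hp hq hpq]
  have := pow_four_mul_add_pos hα.ne' hp hq hpq
  positivity

theorem strainCos_eq_two_mul_div_one_add_sq_iff (hα : 0 < α) (hα1 : α ≠ 1) (hp : 0 ≤ p)
    (hq : 0 ≤ q) (hpq : p + q = 1) : strainCos α p q = 2 * α / (1 + α ^ 2) ↔ q = α ^ 2 * p := by
  have hα2 : α ^ 2 - 1 ≠ 0 := by
    refine sub_ne_zero.mpr fun h => hα1 ?_
    nlinarith
  have hD := pow_four_mul_add_pos hα.ne' hp hq hpq
  rw [← sq_eq_sq₀ (strainCos_nonneg hα hp hq) (by positivity), ← sub_eq_zero,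
    strainCos_sq_sub_sq hα hp hq hpq, div_eq_zero_iff, or_iff_left (by positivity),
    pow_eq_zero_iff two_ne_zero, mul_eq_zero, or_iff_right hα2, sub_eq_zero, eq_comm]

theorem sq_mul_add_inv_sq_mul_eq_one (hα : α ≠ 0) (hpq : p + q = 1) (h : q = α ^ 2 * p) :
    α ^ 2 * p + α⁻¹ ^ 2 * q = 1 := by
  rw [← hpq, h]
  field_simp
  ring

theorem eq_sq_mul_iff_eq_div (hpq : p + q = 1) : q = α ^ 2 * p ↔ q = α ^ 2 / (1 + α ^ 2) := by
  obtain rfl : p = 1 - q := by linarith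
  rw [eq_div_iff (by positivity)]
  constructor <;> intro h <;> linarith

end

theorem sq_add_sq_eq_one_of_norm_eq_one {x : EuclideanSpace ℝ (Fin 3)} (hx : ‖x‖ = 1)
    (hx2 : x 2 = 0) : x 0 ^ 2 + x 1 ^ 2 = 1 := by
  simpa [Fin.sum_univ_three, hx, hx2] using (EuclideanSpace.real_norm_sq_eq x).symm

theorem exists_norm_eq_one_sq_eq_sq_mul_sq (α : ℝ) :
    ∃ y : EuclideanSpace ℝ (Fin 3), ‖y‖ = 1 ∧ y 2 = 0 ∧ y 1 ^ 2 = α ^ 2 * y 0 ^ 2 := by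
  set v : EuclideanSpace ℝ (Fin 3) := !₂[1, α, 0]
  have hv : v ≠ 0 := fun h => by simpa [v] using congr_arg (· 0) h
  refine ⟨‖v‖⁻¹ • v, norm_smul_inv_norm hv, by simp [v], ?_⟩
  simp only [PiLp.smul_apply, cons_val_one, cons_val_zero, smul_eq_mul, mul_one, v]
  ring

theorem inner_div_norm_toEuclideanLin_diagonal (α : ℝ) {y : EuclideanSpace ℝ (Fin 3)}
    (hy2 : y 2 = 0) :
    inner ℝ y (toEuclideanLin (diagonal ![α, α⁻¹, 1]) y) /
        ‖toEuclideanLin (diagonal ![α, α⁻¹, 1]) y‖ = strainCos α (y 0 ^ 2) (y 1 ^ 2) := by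
  simp [real_inner_toEuclideanLin_diagonal, norm_toEuclideanLin_diagonal, Fin.sum_univ_three,
    hy2, strainCos]

/-- For `α > 1` and `F = diag(α, 1/α, 1)`: among unit vectors
`x = (x₁, x₂, 0)` orthogonal to the third axis, the cosine `⟨x, Fx⟩ / ‖Fx‖` of the angle
between `x` and `Fx` attains its minimum exactly at those `x` with `x₂² = α² x₁²`
(equivalently `x₂² = α²/(1+α²)`), and for every such minimizer `‖F x‖ = ‖x‖ = 1`;
that is, the directions of maximum tangential strain are the initial directions of no
distortion. -/
theorem max_tangential_strain_iff_no_distortion (α : ℝ) (hα : 1 < α)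
    (x : EuclideanSpace ℝ (Fin 3)) (hx : ‖x‖ = 1) (hx3 : x 2 = 0) :
    ((∀ y : EuclideanSpace ℝ (Fin 3), ‖y‖ = 1 → y 2 = 0 →
        (inner ℝ x (Matrix.toEuclideanLin (Matrix.diagonal ![α, α⁻¹, 1]) x) : ℝ) /
            ‖Matrix.toEuclideanLin (Matrix.diagonal ![α, α⁻¹, 1]) x‖ ≤
          (inner ℝ y (Matrix.toEuclideanLin (Matrix.diagonal ![α, α⁻¹, 1]) y) : ℝ) /
            ‖Matrix.toEuclideanLin (Matrix.diagonal ![α, α⁻¹, 1]) y‖)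
      ↔ (x 1) ^ 2 = α ^ 2 * (x 0) ^ 2)
    ∧ ((x 1) ^ 2 = α ^ 2 * (x 0) ^ 2 ↔ (x 1) ^ 2 = α ^ 2 / (1 + α ^ 2))
    ∧ ((x 1) ^ 2 = α ^ 2 * (x 0) ^ 2 →
        ‖Matrix.toEuclideanLin (Matrix.diagonal ![α, α⁻¹, 1]) x‖ = 1) := by
  have hα0 : 0 < α := by linarith
  have hsum := sq_add_sq_eq_one_of_norm_eq_one hx hx3
  have min_le : ∀ y : EuclideanSpace ℝ (Fin 3), ‖y‖ = 1 → y 2 = 0 →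
      2 * α / (1 + α ^ 2) ≤ strainCos α (y 0 ^ 2) (y 1 ^ 2) := fun y hy hy2 =>
    two_mul_div_one_add_sq_le_strainCos hα0 (sq_nonneg _) (sq_nonneg _)
      (sq_add_sq_eq_one_of_norm_eq_one hy hy2)
  have eq_min_iff : ∀ y : EuclideanSpace ℝ (Fin 3), ‖y‖ = 1 → y 2 = 0 →
      (strainCos α (y 0 ^ 2) (y 1 ^ 2) = 2 * α / (1 + α ^ 2) ↔ y 1 ^ 2 = α ^ 2 * y 0 ^ 2) :=
    fun y hy hy2 => strainCos_eq_two_mul_div_one_add_sq_iff hα0 hα.ne' (sq_nonneg _)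
      (sq_nonneg _) (sq_add_sq_eq_one_of_norm_eq_one hy hy2)
  simp only [inner_div_norm_toEuclideanLin_diagonal α hx3]
  refine ⟨⟨fun hx_min => ?_, fun h y hy hy2 => ?_⟩, eq_sq_mul_iff_eq_div hsum, fun h => ?_⟩
  · obtain ⟨y, hy, hy2, hy_min⟩ := exists_norm_eq_one_sq_eq_sq_mul_sq α
    have hle := hx_min y hy hy2
    rw [inner_div_norm_toEuclideanLin_diagonal α hy2, (eq_min_iff y hy hy2).mpr hy_min] at hle
    exact (eq_min_iff x hx hx3).mp (hle.antisymm (min_le x hx hx3))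
  · rw [inner_div_norm_toEuclideanLin_diagonal α hy2, (eq_min_iff x hx hx3).mpr h]
    exact min_le y hy hy2
  · rw [norm_toEuclideanLin_diagonal, Real.sqrt_eq_one]
    simpa [Fin.sum_univ_three, hx3] using sq_mul_add_inv_sq_mul_eq_one hα0.ne' hsum h
end

section
/- Let T : PSym(3) → Sym(3) be continuous, satisfy T(1) = 0 and the law of superposition. Then for every U ∈ PSym(3) and every real number r one has T(Uʳ) = r · T(U), where Uʳ denotes the real matrix power of U (obtained by raising the eigenvalues of U to the power r in a spectral decomposition). -/
/-!
For fixed `U`, the matrix powers `r ↦ Uʳ` form a continuous one-parameter group of pairwise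
commuting positive definite matrices, `U^(r+s) = Uʳ Uˢ`. The law of superposition therefore
makes `r ↦ T(Uʳ)` a continuous additive map `ℝ → Sym(3)`, which is necessarily `ℝ`-linear;
evaluating at `r = 1` gives `T(Uʳ) = r • T(U)`.
-/

open scoped ComplexOrder

/-- The real matrix power `Uʳ` of a symmetric matrix, obtained by raising the eigenvalues
to the power `r` in a spectral decomposition (junk value `0` on non-Hermitian input). -/
noncomputable def matRpow (A : Matrix (Fin 3) (Fin 3) ℝ) (r : ℝ) :
    Matrix (Fin 3) (Fin 3) ℝ :=
  if hA : A.IsHermitian then hA.cfc (fun t => t ^ r) else 0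

namespace Matrix

variable {n 𝕜 : Type*} [Fintype n] [DecidableEq n] [RCLike 𝕜] {A : Matrix n n 𝕜}

lemma PosDef.pos_of_mem_spectrum (hA : A.PosDef) {x : ℝ} (hx : x ∈ spectrum ℝ A) : 0 < x := by
  obtain ⟨i, rfl⟩ := hA.isHermitian.spectrum_real_eq_range_eigenvalues ▸ hx
  exact hA.eigenvalues_pos i

lemma continuousOn_spectrum_real (f : ℝ → ℝ) : ContinuousOn f (spectrum ℝ A) :=
  A.finite_real_spectrum.continuousOn f

lemma IsHermitian.posDef_cfc (hA : A.IsHermitian) {f : ℝ → ℝ}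
    (hf : ∀ x ∈ spectrum ℝ A, 0 < f x) : (cfc f A).PosDef := by
  have hB : (cfc f A).IsHermitian := cfc_predicate f A
  refine hB.posDef_iff_eigenvalues_pos.mpr fun i => ?_
  obtain ⟨x, hx, hfx⟩ := cfc_map_spectrum f A hA (A.continuousOn_spectrum_real f) ▸
    hB.eigenvalues_mem_spectrum_real i
  exact hfx ▸ hf x hx

lemma IsHermitian.continuous_cfc_fun {X : Type*} [TopologicalSpace X] (hA : A.IsHermitian)
    {f : X → ℝ → ℝ} (hf : ∀ i, Continuous fun x => f x (hA.eigenvalues i)) :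
    Continuous fun x => cfc (f x) A := by
  simp only [hA.cfc_eq, IsHermitian.cfc, Unitary.conjStarAlgAut_apply]
  fun_prop

end Matrix

section matRpow

variable {U : Matrix (Fin 3) (Fin 3) ℝ}

lemma matRpow_eq_cfc (hU : U.IsHermitian) (r : ℝ) :
    matRpow U r = cfc (fun t : ℝ => t ^ r) U := by
  rw [matRpow, dif_pos hU, hU.cfc_eq]

lemma matRpow_one (hU : U.IsHermitian) : matRpow U 1 = U := by
  simp only [matRpow_eq_cfc hU, Real.rpow_one]
  exact cfc_id' ℝ U

lemma matRpow_posDef (hU : U.PosDef) (r : ℝ) : (matRpow U r).PosDef := by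
  rw [matRpow_eq_cfc hU.1]
  exact hU.1.posDef_cfc fun x hx => Real.rpow_pos_of_pos (hU.pos_of_mem_spectrum hx) r

lemma matRpow_add (hU : U.PosDef) (r s : ℝ) :
    matRpow U (r + s) = matRpow U r * matRpow U s := by
  simp only [matRpow_eq_cfc hU.1]
  rw [← cfc_mul _ _ U (U.continuousOn_spectrum_real _) (U.continuousOn_spectrum_real _)]
  exact cfc_congr fun x hx => Real.rpow_add (hU.pos_of_mem_spectrum hx) r s

lemma matRpow_mul_comm (hU : U.PosDef) (r s : ℝ) :
    matRpow U r * matRpow U s = matRpow U s * matRpow U r := by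
  rw [← matRpow_add hU, ← matRpow_add hU, add_comm]

lemma continuous_matRpow (hU : U.PosDef) : Continuous (matRpow U) := by
  rw [show matRpow U = fun r => cfc (fun t : ℝ => t ^ r) U from funext (matRpow_eq_cfc hU.1)]
  exact hU.1.continuous_cfc_fun fun i => Real.continuous_const_rpow (hU.eigenvalues_pos i).ne'

end matRpow

theorem stress_of_real_power_general
    (T : Matrix (Fin 3) (Fin 3) ℝ → Matrix (Fin 3) (Fin 3) ℝ)
    (hCont : ContinuousOn T {U : Matrix (Fin 3) (Fin 3) ℝ | U.PosDef})
    (hSup : ∀ U₁ U₂ : Matrix (Fin 3) (Fin 3) ℝ, U₁.PosDef → U₂.PosDef →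
      U₁ * U₂ = U₂ * U₁ → T (U₁ * U₂) = T U₁ + T U₂) :
    ∀ U : Matrix (Fin 3) (Fin 3) ℝ, U.PosDef → ∀ r : ℝ,
      T (matRpow U r) = r • T U := by
  intro U hU r
  let G : ℝ →+ Matrix (Fin 3) (Fin 3) ℝ :=
    AddMonoidHom.mk' (fun a => T (matRpow U a)) fun a b => by
      rw [matRpow_add hU]
      exact hSup _ _ (matRpow_posDef hU a) (matRpow_posDef hU b) (matRpow_mul_comm hU a b)
  have hG : Continuous G := hCont.comp_continuous (continuous_matRpow hU) (matRpow_posDef hU)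
  simpa [G, matRpow_one hU.1] using map_real_smul G hG r 1

/-- If `T : PSym(3) → Sym(3)` is continuous, satisfies `T(1) = 0` and the
law of superposition, then `T(Uʳ) = r • T(U)` for every positive definite `U` and every
real `r`, where `Uʳ` is the real matrix power of `U`. -/
theorem stress_of_real_power
    (T : Matrix (Fin 3) (Fin 3) ℝ → Matrix (Fin 3) (Fin 3) ℝ)
    (hSym : ∀ U : Matrix (Fin 3) (Fin 3) ℝ, U.PosDef → (T U).IsHermitian)
    (hCont : ContinuousOn T {U : Matrix (Fin 3) (Fin 3) ℝ | U.PosDef})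
    (hOne : T 1 = 0)
    (hSup : ∀ U₁ U₂ : Matrix (Fin 3) (Fin 3) ℝ, U₁.PosDef → U₂.PosDef →
      U₁ * U₂ = U₂ * U₁ → T (U₁ * U₂) = T U₁ + T U₂) :
    ∀ U : Matrix (Fin 3) (Fin 3) ℝ, U.PosDef → ∀ r : ℝ,
      T (matRpow U r) = r • T U :=
  stress_of_real_power_general T hCont hSup
end

section
/- Let T : PSym(3) → Sym(3) be continuous, satisfy T(1) = 0 and the law of superposition, and suppose that for every α > 0 there exists s ∈ ℝ with T(diag(α, 1/α, 1)) = diag(s, −s, 0). Then there exists a constant c ∈ ℝ such that T(diag(α, 1/α, 1)) = c · diag(ln α, −ln α, 0) for all α > 0. -/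
open Matrix Set

/-!
Along the pure shear stretches `diag(α, 1/α, 1)`, which commute and multiply like the
positive reals, superposition turns the shear component `φ α` of the stress into a continuous
solution of `φ (α β) = φ α + φ β`. Then `t ↦ φ (exp t)` is a continuous additive map
`ℝ → ℝ`, hence linear, so `φ = c · ln`.
-/

theorem exists_eq_mul_log_of_map_mul {φ : ℝ → ℝ} (hφ : ContinuousOn φ (Ioi 0))
    (hmul : ∀ a b, 0 < a → 0 < b → φ (a * b) = φ a + φ b) :
    ∃ c : ℝ, ∀ a, 0 < a → φ a = c * Real.log a := by
  let g : ℝ →+ ℝ := AddMonoidHom.mk' (φ ∘ Real.exp) fun s t => by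
    simp only [Function.comp_apply, Real.exp_add]
    exact hmul _ _ (Real.exp_pos s) (Real.exp_pos t)
  have hg : Continuous g := hφ.comp_continuous Real.continuous_exp Real.exp_pos
  refine ⟨g 1, fun a ha => ?_⟩
  calc φ a = g (Real.log a • 1) := by simp [g, Real.exp_log ha]
    _ = g 1 * Real.log a := by rw [map_real_smul g hg, smul_eq_mul, mul_comm]

noncomputable def shearStretch (a : ℝ) : Matrix (Fin 3) (Fin 3) ℝ := diagonal ![a, a⁻¹, 1]

theorem posDef_shearStretch {a : ℝ} (ha : 0 < a) : (shearStretch a).PosDef :=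
  posDef_diagonal_iff.mpr fun i => by fin_cases i <;> simp [ha]

theorem shearStretch_mul (a b : ℝ) : shearStretch a * shearStretch b = shearStretch (a * b) := by
  simp only [shearStretch, diagonal_mul_diagonal]
  congr 1
  ext i
  fin_cases i <;> simp [mul_comm]

theorem shearStretch_commute (a b : ℝ) :
    shearStretch a * shearStretch b = shearStretch b * shearStretch a := by
  rw [shearStretch_mul, shearStretch_mul, mul_comm]

theorem continuousOn_shearStretch : ContinuousOn shearStretch {0}ᶜ :=
  continuous_id.matrix_diagonal.comp_continuousOn <| continuousOn_pi.mpr fun i => by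
    fin_cases i
    · exact continuousOn_id
    · exact continuousOn_inv₀
    · exact continuousOn_const

theorem shear_stress_is_logarithmic_general
    (T : Matrix (Fin 3) (Fin 3) ℝ → Matrix (Fin 3) (Fin 3) ℝ)
    (hCont : ContinuousOn T {U : Matrix (Fin 3) (Fin 3) ℝ | U.PosDef})
    (hSup : ∀ U₁ U₂ : Matrix (Fin 3) (Fin 3) ℝ, U₁.PosDef → U₂.PosDef →
      U₁ * U₂ = U₂ * U₁ → T (U₁ * U₂) = T U₁ + T U₂)
    (hShear : ∀ a : ℝ, 0 < a → ∃ s : ℝ,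
      T (Matrix.diagonal ![a, a⁻¹, 1]) = Matrix.diagonal ![s, -s, 0]) :
    ∃ c : ℝ, ∀ a : ℝ, 0 < a →
      T (Matrix.diagonal ![a, a⁻¹, 1])
        = c • Matrix.diagonal ![Real.log a, -Real.log a, 0] := by
  set φ : ℝ → ℝ := fun a => T (shearStretch a) 0 0
  have hT : ∀ a, 0 < a → T (shearStretch a) = diagonal ![φ a, -φ a, 0] := fun a ha => by
    obtain ⟨s, hs⟩ := hShear a ha
    simp [φ, shearStretch, hs]
  have hφ_cont : ContinuousOn φ (Ioi 0) :=
    (continuous_id.matrix_elem 0 0).comp_continuousOn <|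
      hCont.comp (continuousOn_shearStretch.mono fun _ ha => ha.ne')
        fun _ ha => posDef_shearStretch ha
  have hφ_mul : ∀ a b, 0 < a → 0 < b → φ (a * b) = φ a + φ b := fun a b ha hb => by
    have := hSup _ _ (posDef_shearStretch ha) (posDef_shearStretch hb) (shearStretch_commute a b)
    simp only [φ, ← shearStretch_mul, this, Matrix.add_apply]
  obtain ⟨c, hc⟩ := exists_eq_mul_log_of_map_mul hφ_cont hφ_mul
  refine ⟨c, fun a ha => ?_⟩
  change T (shearStretch a) = _
  rw [hT a ha, hc a ha, ← diagonal_smul]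
  congr 1
  ext i
  fin_cases i <;> simp

/-- If `T : PSym(3) → Sym(3)` is continuous, satisfies `T(1) = 0` and the
law of superposition, and maps every pure shear stretch `diag(α, 1/α, 1)` (`α > 0`) to a
pure shear stress `diag(s, −s, 0)`, then there is a constant `c` with
`T(diag(α, 1/α, 1)) = c · diag(ln α, −ln α, 0)` for all `α > 0`. -/
theorem shear_stress_is_logarithmic
    (T : Matrix (Fin 3) (Fin 3) ℝ → Matrix (Fin 3) (Fin 3) ℝ)
    (hSym : ∀ U : Matrix (Fin 3) (Fin 3) ℝ, U.PosDef → (T U).IsHermitian)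
    (hCont : ContinuousOn T {U : Matrix (Fin 3) (Fin 3) ℝ | U.PosDef})
    (hOne : T 1 = 0)
    (hSup : ∀ U₁ U₂ : Matrix (Fin 3) (Fin 3) ℝ, U₁.PosDef → U₂.PosDef →
      U₁ * U₂ = U₂ * U₁ → T (U₁ * U₂) = T U₁ + T U₂)
    (hShear : ∀ a : ℝ, 0 < a → ∃ s : ℝ,
      T (Matrix.diagonal ![a, a⁻¹, 1]) = Matrix.diagonal ![s, -s, 0]) :
    ∃ c : ℝ, ∀ a : ℝ, 0 < a →
      T (Matrix.diagonal ![a, a⁻¹, 1])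
        = c • Matrix.diagonal ![Real.log a, -Real.log a, 0] :=
  shear_stress_is_logarithmic_general T hCont hSup hShear
end

section
/- Let T : PSym(3) → Sym(3) be isotropic, satisfy the law of superposition, and suppose T(U) = 0 holds if and only if U = 1. Then: (i) for every α > 0 there exists s ∈ ℝ with T(diag(α, 1/α, 1)) = diag(s, −s, 0), and (ii) for every λ > 0 there exists a ∈ ℝ with T(λ·1) = a·1. (That is, Becker's shear axiom and dilation axiom follow from isotropy, superposition, and uniqueness of the stress-free state.) -/
open Matrix

private lemma memQ1' : (Matrix.diagonal ![(1:ℝ),-1,1]) ∈ Matrix.orthogonalGroup (Fin 3) ℝ := by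
  rw [Matrix.mem_orthogonalGroup_iff]
  ext i j
  fin_cases i <;> fin_cases j <;>
    simp [Matrix.mul_apply, Fin.sum_univ_three, Matrix.one_apply, Matrix.star_apply]

private lemma memQ2' : (Matrix.diagonal ![(1:ℝ),1,-1]) ∈ Matrix.orthogonalGroup (Fin 3) ℝ := by
  rw [Matrix.mem_orthogonalGroup_iff]
  ext i j
  fin_cases i <;> fin_cases j <;>
    simp [Matrix.mul_apply, Fin.sum_univ_three, Matrix.one_apply, Matrix.star_apply]

private lemma memP01' : (!![0,1,0;1,0,0;0,0,1] : Matrix (Fin 3) (Fin 3) ℝ) ∈ Matrix.orthogonalGroup (Fin 3) ℝ := by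
  rw [Matrix.mem_orthogonalGroup_iff]
  ext i j
  fin_cases i <;> fin_cases j <;>
    simp [Matrix.mul_apply, Fin.sum_univ_three, Matrix.one_apply, Matrix.star_apply]

private lemma memP12' : (!![1,0,0;0,0,1;0,1,0] : Matrix (Fin 3) (Fin 3) ℝ) ∈ Matrix.orthogonalGroup (Fin 3) ℝ := by
  rw [Matrix.mem_orthogonalGroup_iff]
  ext i j
  fin_cases i <;> fin_cases j <;>
    simp [Matrix.mul_apply, Fin.sum_univ_three, Matrix.one_apply, Matrix.star_apply]

private lemma transP01' : (!![0,1,0;1,0,0;0,0,1] : Matrix (Fin 3) (Fin 3) ℝ)ᵀ = !![0,1,0;1,0,0;0,0,1] := by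
  ext i j
  fin_cases i <;> fin_cases j <;>
    simp [Matrix.vecHead, Matrix.vecTail]

private lemma transP12' : (!![1,0,0;0,0,1;0,1,0] : Matrix (Fin 3) (Fin 3) ℝ)ᵀ = !![1,0,0;0,0,1;0,1,0] := by
  ext i j
  fin_cases i <;> fin_cases j <;>
    simp [Matrix.vecHead, Matrix.vecTail]

/-- If `T : PSym(3) → Sym(3)` is isotropic, satisfies the law of
superposition and `T(U) = 0 ↔ U = 1`, then (i) every pure shear stretch
`diag(α, 1/α, 1)` is mapped to a pure shear stress `diag(s, −s, 0)`, and (ii) every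
dilation `λ·1` is mapped to a spherical stress `a·1`. -/
theorem shear_and_dilation_axioms_follow
    (T : Matrix (Fin 3) (Fin 3) ℝ → Matrix (Fin 3) (Fin 3) ℝ)
    (hSym : ∀ U : Matrix (Fin 3) (Fin 3) ℝ, U.PosDef → (T U).IsHermitian)
    (hIso : ∀ Q ∈ Matrix.orthogonalGroup (Fin 3) ℝ,
      ∀ U : Matrix (Fin 3) (Fin 3) ℝ, U.PosDef → T (Qᵀ * U * Q) = Qᵀ * T U * Q)
    (hSup : ∀ U₁ U₂ : Matrix (Fin 3) (Fin 3) ℝ, U₁.PosDef → U₂.PosDef →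
      U₁ * U₂ = U₂ * U₁ → T (U₁ * U₂) = T U₁ + T U₂)
    (hZero : ∀ U : Matrix (Fin 3) (Fin 3) ℝ, U.PosDef → (T U = 0 ↔ U = 1)) :
    (∀ a : ℝ, 0 < a → ∃ s : ℝ,
        T (Matrix.diagonal ![a, a⁻¹, 1]) = Matrix.diagonal ![s, -s, 0])
    ∧ (∀ l : ℝ, 0 < l → ∃ b : ℝ,
        T (l • (1 : Matrix (Fin 3) (Fin 3) ℝ)) = b • 1) := by
  have hone : (1 : Matrix (Fin 3) (Fin 3) ℝ).PosDef := by
    rw [← Matrix.diagonal_one]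
    exact Matrix.posDef_diagonal_iff.mpr fun i => one_pos
  have hT1 : T 1 = 0 := (hZero 1 hone).mpr rfl
  constructor
  · -- shear axiom
    intro a ha
    set D : Matrix (Fin 3) (Fin 3) ℝ := Matrix.diagonal ![a, a⁻¹, 1] with hDdef
    set E : Matrix (Fin 3) (Fin 3) ℝ := Matrix.diagonal ![a⁻¹, a, 1] with hEdef
    have hDpos : D.PosDef := Matrix.posDef_diagonal_iff.mpr (by
      intro i; fin_cases i <;> simp <;> positivity)
    have hEpos : E.PosDef := Matrix.posDef_diagonal_iff.mpr (by
      intro i; fin_cases i <;> simp <;> positivity)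
    have hDE : D * E = 1 := by
      rw [hDdef, hEdef, Matrix.diagonal_mul_diagonal]
      ext i j
      fin_cases i <;> fin_cases j <;>
        simp [Matrix.diagonal_apply, Matrix.one_apply,
          mul_inv_cancel₀ ha.ne', inv_mul_cancel₀ ha.ne']
    have hcomm : D * E = E * D := by
      rw [hDdef, hEdef, Matrix.diagonal_mul_diagonal, Matrix.diagonal_mul_diagonal]
      ext i j
      fin_cases i <;> fin_cases j <;> simp [Matrix.diagonal_apply] <;> ring
    have hsum : T D + T E = 0 := by
      rw [← hSup D E hDpos hEpos hcomm, hDE, hT1]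
    set S := T D with hSdef
    have h1 : (Matrix.diagonal ![(1:ℝ),-1,1])ᵀ * D * (Matrix.diagonal ![(1:ℝ),-1,1]) = D := by
      ext i j
      fin_cases i <;> fin_cases j <;>
        simp [hDdef, Matrix.mul_apply, Fin.sum_univ_three]
    have hQ1 : S = (Matrix.diagonal ![(1:ℝ),-1,1])ᵀ * S * (Matrix.diagonal ![(1:ℝ),-1,1]) := by
      conv_lhs => rw [hSdef, ← h1, hIso _ memQ1' D hDpos]
    have h2 : (Matrix.diagonal ![(1:ℝ),1,-1])ᵀ * D * (Matrix.diagonal ![(1:ℝ),1,-1]) = D := by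
      ext i j
      fin_cases i <;> fin_cases j <;>
        simp [hDdef, Matrix.mul_apply, Fin.sum_univ_three]
    have hQ2 : S = (Matrix.diagonal ![(1:ℝ),1,-1])ᵀ * S * (Matrix.diagonal ![(1:ℝ),1,-1]) := by
      conv_lhs => rw [hSdef, ← h2, hIso _ memQ2' D hDpos]
    have e01 : S 0 1 = 0 := by
      have := congrFun (congrFun hQ1 0) 1
      simp [Matrix.mul_apply, Fin.sum_univ_three] at this
      linarith
    have e10 : S 1 0 = 0 := by
      have := congrFun (congrFun hQ1 1) 0
      simp [Matrix.mul_apply, Fin.sum_univ_three] at this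
      linarith
    have e12 : S 1 2 = 0 := by
      have := congrFun (congrFun hQ1 1) 2
      simp [Matrix.mul_apply, Fin.sum_univ_three] at this
      linarith
    have e21 : S 2 1 = 0 := by
      have := congrFun (congrFun hQ1 2) 1
      simp [Matrix.mul_apply, Fin.sum_univ_three] at this
      linarith
    have e02 : S 0 2 = 0 := by
      have := congrFun (congrFun hQ2 0) 2
      simp [Matrix.mul_apply, Fin.sum_univ_three] at this
      linarith
    have e20 : S 2 0 = 0 := by
      have := congrFun (congrFun hQ2 2) 0
      simp [Matrix.mul_apply, Fin.sum_univ_three] at this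
      linarith
    have hP : (!![0,1,0;1,0,0;0,0,1] : Matrix (Fin 3) (Fin 3) ℝ)ᵀ * D *
        (!![0,1,0;1,0,0;0,0,1] : Matrix (Fin 3) (Fin 3) ℝ) = E := by
      rw [transP01']
      ext i j
      fin_cases i <;> fin_cases j <;>
        simp [hDdef, hEdef, Matrix.mul_apply, Fin.sum_univ_three, Matrix.diagonal_apply,
          Matrix.vecMul, Matrix.vecHead, Matrix.vecTail, dotProduct]
    have hTE : T E = -S := by
      rw [hSdef, eq_neg_iff_add_eq_zero, add_comm]; exact hsum
    have hPS : (!![0,1,0;1,0,0;0,0,1] : Matrix (Fin 3) (Fin 3) ℝ)ᵀ * S *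
        (!![0,1,0;1,0,0;0,0,1] : Matrix (Fin 3) (Fin 3) ℝ) = -S := by
      rw [← hTE, ← hP, hIso _ memP01' D hDpos]
    rw [transP01'] at hPS
    have e11 : S 1 1 = -(S 0 0) := by
      have := congrFun (congrFun hPS 1) 1
      simp [Matrix.mul_apply, Fin.sum_univ_three, Matrix.neg_apply,
        Matrix.vecHead, Matrix.vecTail, Matrix.vecMul, dotProduct] at this
      linarith
    have e22 : S 2 2 = 0 := by
      have := congrFun (congrFun hPS 2) 2
      simp [Matrix.mul_apply, Fin.sum_univ_three, Matrix.neg_apply,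
        Matrix.vecHead, Matrix.vecTail, Matrix.vecMul, dotProduct] at this
      linarith
    refine ⟨S 0 0, ?_⟩
    ext i j
    fin_cases i <;> fin_cases j <;>
      simp [Matrix.diagonal_apply, e01, e10, e12, e21, e02, e20, e11, e22]
  · -- dilation axiom
    intro l hl
    set U : Matrix (Fin 3) (Fin 3) ℝ := l • 1 with hUdef
    have hUd : U = Matrix.diagonal ![l, l, l] := by
      ext i j
      fin_cases i <;> fin_cases j <;>
        simp [hUdef, Matrix.smul_apply, Matrix.one_apply, Matrix.diagonal_apply]
    have hUpos : U.PosDef := by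
      rw [hUd]
      exact Matrix.posDef_diagonal_iff.mpr (by intro i; fin_cases i <;> simpa)
    have hfix : ∀ Q ∈ Matrix.orthogonalGroup (Fin 3) ℝ, Qᵀ * U * Q = U := by
      intro Q hQ
      have h : star Q * Q = 1 := hQ.1
      have hs : star Q = Qᵀ := by ext i j; simp [Matrix.star_apply]
      rw [hs] at h
      rw [hUdef, Matrix.mul_smul, mul_one, Matrix.smul_mul, h]
    set S := T U with hSdef
    have hfixS : ∀ Q ∈ Matrix.orthogonalGroup (Fin 3) ℝ, S = Qᵀ * S * Q := by
      intro Q hQ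
      conv_lhs => rw [hSdef, ← hfix Q hQ, hIso Q hQ U hUpos]
    have hQ1 := hfixS _ memQ1'
    have hQ2 := hfixS _ memQ2'
    have hP01 := hfixS _ memP01'
    have hP12 := hfixS _ memP12'
    rw [transP01'] at hP01
    rw [transP12'] at hP12
    have e01 : S 0 1 = 0 := by
      have := congrFun (congrFun hQ1 0) 1
      simp [Matrix.mul_apply, Fin.sum_univ_three] at this
      linarith
    have e10 : S 1 0 = 0 := by
      have := congrFun (congrFun hQ1 1) 0
      simp [Matrix.mul_apply, Fin.sum_univ_three] at this
      linarith
    have e12 : S 1 2 = 0 := by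
      have := congrFun (congrFun hQ1 1) 2
      simp [Matrix.mul_apply, Fin.sum_univ_three] at this
      linarith
    have e21 : S 2 1 = 0 := by
      have := congrFun (congrFun hQ1 2) 1
      simp [Matrix.mul_apply, Fin.sum_univ_three] at this
      linarith
    have e02 : S 0 2 = 0 := by
      have := congrFun (congrFun hQ2 0) 2
      simp [Matrix.mul_apply, Fin.sum_univ_three] at this
      linarith
    have e20 : S 2 0 = 0 := by
      have := congrFun (congrFun hQ2 2) 0
      simp [Matrix.mul_apply, Fin.sum_univ_three] at this
      linarith
    have e11 : S 1 1 = S 0 0 := by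
      have := congrFun (congrFun hP01 1) 1
      simp [Matrix.mul_apply, Fin.sum_univ_three,
        Matrix.vecHead, Matrix.vecTail, Matrix.vecMul, dotProduct] at this
      linarith
    have e22 : S 2 2 = S 1 1 := by
      have := congrFun (congrFun hP12 2) 2
      simp [Matrix.mul_apply, Fin.sum_univ_three,
        Matrix.vecHead, Matrix.vecTail, Matrix.vecMul, dotProduct] at this
      linarith
    refine ⟨S 0 0, ?_⟩
    ext i j
    fin_cases i <;> fin_cases j <;>
      simp [Matrix.smul_apply, Matrix.one_apply, e01, e10, e12, e21, e02, e20, e11, e22]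
end

section
/- Let T : PSym(3) → Sym(3) be a continuous isotropic map satisfying the law of superposition and such that T(U) = 0 holds if and only if U = 1. Then there exist constants G, Λ ∈ ℝ with G ≠ 0 and 3Λ + 2G ≠ 0 such that T(U) = 2G · log(U) + Λ · tr(log U) · 1 for all U ∈ PSym(3). -/
/-!
Superposition makes `x ↦ T (diagonal (exp ∘ x))` additive on `ℝ³`, and continuity makes it
`ℝ`-linear. Isotropy under the coordinate reflections forces its values to be diagonal, and
isotropy under permutation matrices makes the induced linear map `ℝ³ → ℝ³` commute with
permutations of coordinates, so it is `x ↦ α • x + β • (∑ i, x i) • 1`. Conjugating by an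
orthonormal eigenbasis of `U` extends this to `T U = α • log U + (β * tr (log U)) • 1`, and
`T U = 0 ↔ U = 1` rules out `α = 0` (test `x = e₀ - e₁`) and `α + 3 β = 0` (test `x = 1`).
-/

open Matrix

/-- The principal matrix logarithm of a symmetric (positive definite) matrix, obtained by
applying the real logarithm to the eigenvalues in a spectral decomposition (junk value `0`
on non-Hermitian input). -/
noncomputable def matLog (A : Matrix (Fin 3) (Fin 3) ℝ) : Matrix (Fin 3) (Fin 3) ℝ :=
  if hA : A.IsHermitian then hA.cfc Real.log else 0

theorem LinearMap.exists_apply_eq_of_comp_perm {ι : Type*} [Fintype ι] [DecidableEq ι]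
    (f : (ι → ℝ) →ₗ[ℝ] ι → ℝ)
    (hf : ∀ (σ : Equiv.Perm ι) x, f (x ∘ σ) = f x ∘ σ) {i₀ k₀ : ι} (h : i₀ ≠ k₀) :
    ∃ α β : ℝ, ∀ x i, f x i = α * x i + β * ∑ j, x j := by
  set e : ι → ι → ℝ := fun k => Pi.single k 1
  have he : ∀ (σ : Equiv.Perm ι) k, e k ∘ σ = e (σ.symm k) := by
    intro σ k; funext m; simp [e, Pi.single_apply, Equiv.eq_symm_apply]
  have hdiag : ∀ k, f (e k) k = f (e k₀) k₀ := by
    intro k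
    simpa [he] using congrFun (hf (Equiv.swap k k₀) (e k₀)) k
  have hoff : ∀ k i, i ≠ k → f (e k) i = f (e k₀) i₀ := by
    intro k i hik
    set i' := Equiv.swap k k₀ i
    have hi' : i' ≠ k₀ := by simpa [i', Equiv.swap_apply_eq_iff] using hik
    set σ := (Equiv.swap k k₀).trans (Equiv.swap i' i₀)
    have hσk : σ k = k₀ := by simp [σ, Equiv.swap_apply_of_ne_of_ne hi'.symm h.symm]
    have hσi : σ i = i₀ := by simp [σ, i']
    have hσk' : σ.symm k₀ = k := by rw [← hσk, Equiv.symm_apply_apply]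
    have := congrFun (hf σ (e k₀)) i
    rwa [he, hσk', Function.comp_apply, hσi] at this
  refine ⟨f (e k₀) k₀ - f (e k₀) i₀, f (e k₀) i₀, fun x i => ?_⟩
  have hx : x = ∑ k, x k • e k := by simpa [e] using pi_eq_sum_univ' x
  have hek : ∀ k, f (e k) i = (f (e k₀) k₀ - f (e k₀) i₀) * e k i + f (e k₀) i₀ := by
    intro k
    by_cases hik : i = k
    · subst hik; simp [e, hdiag]
    · simp [e, hoff k i hik, hik]
  have hfx : f x i = ∑ k, x k * f (e k) i := by
    conv_lhs => rw [hx]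
    simp
  simp only [hfx, hek, mul_add, Finset.sum_add_distrib]
  simp [e, Pi.single_apply, ← Finset.sum_mul]
  ring

namespace Matrix

variable {ι : Type*} [DecidableEq ι]

noncomputable def diagExp (x : ι → ℝ) : Matrix ι ι ℝ :=
  diagonal fun i => Real.exp (x i)

theorem posDef_diagExp (x : ι → ℝ) : (diagExp x).PosDef :=
  posDef_diagonal_iff.mpr fun _ => Real.exp_pos _

theorem continuous_diagExp : Continuous (diagExp : (ι → ℝ) → Matrix ι ι ℝ) :=
  Continuous.matrix_diagonal <| by fun_prop

theorem diagExp_comp (σ : Equiv.Perm ι) (x : ι → ℝ) :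
    diagExp (x ∘ σ) = (diagExp x).submatrix σ σ :=
  (submatrix_diagonal (fun i => Real.exp (x i)) σ σ.injective).symm

theorem diagExp_eq_one_iff {x : ι → ℝ} : diagExp x = 1 ↔ x = 0 := by
  simp [diagExp, ← diagonal_one, funext_iff]

variable [Fintype ι]

theorem diagExp_add (x y : ι → ℝ) : diagExp (x + y) = diagExp x * diagExp y := by
  simp [diagExp, Real.exp_add]

theorem diagonal_mem_orthogonalGroup {s : ι → ℝ} (hs : ∀ i, s i * s i = 1) :
    diagonal s ∈ orthogonalGroup ι ℝ := by
  rw [mem_orthogonalGroup_iff, diagonal_transpose, diagonal_mul_diagonal, ← diagonal_one]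
  exact congrArg diagonal (funext hs)

theorem permMatrix_mem_orthogonalGroup (σ : Equiv.Perm ι) :
    σ.permMatrix ℝ ∈ orthogonalGroup ι ℝ := by
  rw [mem_orthogonalGroup_iff, transpose_permMatrix, ← permMatrix_mul]
  simp

def IsIsotropic (T : Matrix ι ι ℝ → Matrix ι ι ℝ) : Prop :=
  ∀ Q ∈ orthogonalGroup ι ℝ, ∀ U : Matrix ι ι ℝ, U.PosDef → T (Qᵀ * U * Q) = Qᵀ * T U * Q

def SatisfiesSuperposition (T : Matrix ι ι ℝ → Matrix ι ι ℝ) : Prop :=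
  ∀ U₁ U₂ : Matrix ι ι ℝ, U₁.PosDef → U₂.PosDef → U₁ * U₂ = U₂ * U₁ →
    T (U₁ * U₂) = T U₁ + T U₂

variable {T : Matrix ι ι ℝ → Matrix ι ι ℝ}

theorem IsIsotropic.isDiag_apply_diagonal (hT : IsIsotropic T) {d : ι → ℝ}
    (hd : (diagonal d).PosDef) :
    (T (diagonal d)).IsDiag := by
  intro i j hij
  -- The reflection in coordinate `j` fixes `diagonal d` and flips the sign of entry `(i, j)`.
  set s : ι → ℝ := Function.update 1 j (-1)
  have hs : ∀ k, s k * s k = 1 := by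
    intro k; by_cases hk : k = j <;> simp [s, hk]
  have h := congrFun (congrFun (hT _ (diagonal_mem_orthogonalGroup hs) _ hd) i) j
  have hfix : (diagonal s)ᵀ * diagonal d * diagonal s = diagonal d := by
    simp only [diagonal_transpose, diagonal_mul_diagonal]
    congr 1; funext k
    linear_combination d k * hs k
  rw [hfix, diagonal_transpose, mul_diagonal, diagonal_mul] at h
  simp only [s, Function.update_of_ne hij, Function.update_self, Pi.one_apply, one_mul,
    mul_neg, mul_one] at h
  linarith

theorem IsIsotropic.apply_submatrix (hT : IsIsotropic T) (σ : Equiv.Perm ι) {U : Matrix ι ι ℝ}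
    (hU : U.PosDef) :
    T (U.submatrix σ σ) = (T U).submatrix σ σ := by
  have hconj : ∀ M : Matrix ι ι ℝ,
      (σ⁻¹.permMatrix ℝ)ᵀ * M * σ⁻¹.permMatrix ℝ = M.submatrix σ σ := by
    intro M
    simp [PEquiv.toMatrix_toPEquiv_mul, PEquiv.mul_toMatrix_toPEquiv, Equiv.Perm.inv_def]
  simpa only [hconj] using hT _ (permMatrix_mem_orthogonalGroup σ⁻¹) U hU

theorem IsIsotropic.apply_eq_cfc_log (hT : IsIsotropic T) {α β : ℝ}
    (h : ∀ x, T (diagExp x) = α • diagonal x + (β * ∑ i, x i) • 1)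
    {U : Matrix ι ι ℝ} (hU : U.PosDef) :
    T U = α • hU.1.cfc Real.log + (β * (hU.1.cfc Real.log).trace) • 1 := by
  set V : Matrix ι ι ℝ := (hU.1.eigenvectorUnitary : Matrix ι ι ℝ)
  set x : ι → ℝ := Real.log ∘ hU.1.eigenvalues
  have hV : V ∈ orthogonalGroup ι ℝ := hU.1.eigenvectorUnitary.2
  have hVT : Vᵀ ∈ orthogonalGroup ι ℝ := by
    rw [mem_orthogonalGroup_iff, transpose_transpose, ← mem_orthogonalGroup_iff']
    exact hV
  have hstar : star V = Vᵀ := conjTranspose_eq_transpose_of_trivial V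
  have hlog : hU.1.cfc Real.log = V * diagonal x * Vᵀ := by
    rw [← hstar]; rfl
  have hU_eq : U = Vᵀᵀ * diagExp x * Vᵀ := by
    have hexp : diagExp x = diagonal hU.1.eigenvalues := by
      simp [diagExp, x, Real.exp_log (hU.eigenvalues_pos _)]
    rw [hexp, transpose_transpose, ← hstar]
    exact hU.1.spectral_theorem
  have htr : (hU.1.cfc Real.log).trace = ∑ i, x i := by
    rw [hlog, trace_mul_cycle, (mem_orthogonalGroup_iff' ι ℝ).mp hV, one_mul, trace_diagonal]
  rw [htr, hlog, hU_eq, hT _ hVT _ (posDef_diagExp x), h, transpose_transpose, mul_add, add_mul,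
    Matrix.mul_smul, Matrix.smul_mul, Matrix.mul_smul, Matrix.smul_mul, mul_one,
    (mem_orthogonalGroup_iff ι ℝ).mp hV]

theorem SatisfiesSuperposition.apply_diagExp_add
    (hT : SatisfiesSuperposition T) (x y : ι → ℝ) :
    T (diagExp (x + y)) = T (diagExp x) + T (diagExp y) := by
  rw [diagExp_add]
  exact hT _ _ (posDef_diagExp x) (posDef_diagExp y)
    (by rw [← diagExp_add, ← diagExp_add, add_comm])

theorem exists_apply_diagExp_eq [Nontrivial ι]
    (hIso : IsIsotropic T) (hSup : SatisfiesSuperposition T)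
    (hCont : ContinuousOn T {U | U.PosDef}) :
    ∃ α β : ℝ, ∀ x, T (diagExp x) = α • diagonal x + (β * ∑ i, x i) • 1 := by
  let g : (ι → ℝ) →L[ℝ] Matrix ι ι ℝ := AddMonoidHom.toRealLinearMap
    (AddMonoidHom.mk' (T ∘ diagExp) hSup.apply_diagExp_add)
    (hCont.comp_continuous continuous_diagExp posDef_diagExp)
  let f : (ι → ℝ) →ₗ[ℝ] ι → ℝ := diagLinearMap ι ℝ ℝ ∘ₗ g
  have hg : ∀ x, T (diagExp x) = diagonal (f x) := fun x =>
    (hIso.isDiag_apply_diagonal (posDef_diagExp x)).diagonal_diag.symm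
  have hf : ∀ (σ : Equiv.Perm ι) x, f (x ∘ σ) = f x ∘ σ := by
    intro σ x
    ext i
    change T (diagExp (x ∘ σ)) i i = T (diagExp x) (σ i) (σ i)
    rw [diagExp_comp, hIso.apply_submatrix σ (posDef_diagExp x), submatrix_apply]
  obtain ⟨i₀, k₀, h⟩ := exists_pair_ne ι
  obtain ⟨α, β, hαβ⟩ := f.exists_apply_eq_of_comp_perm hf h
  refine ⟨α, β, fun x => ?_⟩
  rw [hg]
  ext i j
  by_cases hij : i = j
  · subst hij; simp [hαβ]
  · simp [hij]

theorem ne_zero_and_add_card_mul_ne_zero [Nontrivial ι] {α β : ℝ}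
    (h : ∀ x, T (diagExp x) = α • diagonal x + (β * ∑ i, x i) • 1)
    (hT : ∀ x, T (diagExp x) = 0 → x = 0) :
    α ≠ 0 ∧ α + Fintype.card ι * β ≠ 0 := by
  obtain ⟨i₀, k₀, hik⟩ := exists_pair_ne ι
  constructor
  · intro hα
    have := hT (Pi.single i₀ 1 - Pi.single k₀ 1) (by simp [h, hα, Finset.sum_sub_distrib])
    simpa [hik] using congrFun this i₀
  · intro hαβ
    have := hT (fun _ => 1) (by rw [h, diagonal_one, ← add_smul]; simp [← hαβ, mul_comm])
    simpa using congrFun this i₀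

end Matrix

theorem becker_law_from_axioms_general
    (T : Matrix (Fin 3) (Fin 3) ℝ → Matrix (Fin 3) (Fin 3) ℝ)
    (hCont : ContinuousOn T {U : Matrix (Fin 3) (Fin 3) ℝ | U.PosDef})
    (hIso : ∀ Q ∈ Matrix.orthogonalGroup (Fin 3) ℝ,
      ∀ U : Matrix (Fin 3) (Fin 3) ℝ, U.PosDef → T (Qᵀ * U * Q) = Qᵀ * T U * Q)
    (hSup : ∀ U₁ U₂ : Matrix (Fin 3) (Fin 3) ℝ, U₁.PosDef → U₂.PosDef →
      U₁ * U₂ = U₂ * U₁ → T (U₁ * U₂) = T U₁ + T U₂)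
    (hZero : ∀ U : Matrix (Fin 3) (Fin 3) ℝ, U.PosDef → (T U = 0 ↔ U = 1)) :
    ∃ G Lam : ℝ, G ≠ 0 ∧ 3 * Lam + 2 * G ≠ 0 ∧
      ∀ U : Matrix (Fin 3) (Fin 3) ℝ, U.PosDef →
        T U = (2 * G) • matLog U + (Lam * (matLog U).trace) • 1 := by
  obtain ⟨α, β, hT⟩ := exists_apply_diagExp_eq hIso hSup hCont
  obtain ⟨hα, hαβ⟩ := ne_zero_and_add_card_mul_ne_zero hT fun x hx =>
    diagExp_eq_one_iff.mp ((hZero _ (posDef_diagExp x)).mp hx)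
  refine ⟨α / 2, β, by simpa using hα, ?_, fun U hU => ?_⟩
  · convert hαβ using 1
    rw [Fintype.card_fin]
    push_cast
    ring
  · rw [matLog, dif_pos hU.1, IsIsotropic.apply_eq_cfc_log hIso hT hU,
      mul_div_cancel₀ α two_ne_zero]

/-- If `T : PSym(3) → Sym(3)` is a continuous isotropic map satisfying
the law of superposition and `T(U) = 0 ↔ U = 1`, then there exist constants `G ≠ 0` and
`Λ` with `3Λ + 2G ≠ 0` such that `T(U) = 2G·log(U) + Λ·tr(log U)·1` for all positive
definite `U`. -/
theorem becker_law_from_axioms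
    (T : Matrix (Fin 3) (Fin 3) ℝ → Matrix (Fin 3) (Fin 3) ℝ)
    (hSym : ∀ U : Matrix (Fin 3) (Fin 3) ℝ, U.PosDef → (T U).IsHermitian)
    (hCont : ContinuousOn T {U : Matrix (Fin 3) (Fin 3) ℝ | U.PosDef})
    (hIso : ∀ Q ∈ Matrix.orthogonalGroup (Fin 3) ℝ,
      ∀ U : Matrix (Fin 3) (Fin 3) ℝ, U.PosDef → T (Qᵀ * U * Q) = Qᵀ * T U * Q)
    (hSup : ∀ U₁ U₂ : Matrix (Fin 3) (Fin 3) ℝ, U₁.PosDef → U₂.PosDef →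
      U₁ * U₂ = U₂ * U₁ → T (U₁ * U₂) = T U₁ + T U₂)
    (hZero : ∀ U : Matrix (Fin 3) (Fin 3) ℝ, U.PosDef → (T U = 0 ↔ U = 1)) :
    ∃ G Lam : ℝ, G ≠ 0 ∧ 3 * Lam + 2 * G ≠ 0 ∧
      ∀ U : Matrix (Fin 3) (Fin 3) ℝ, U.PosDef →
        T U = (2 * G) • matLog U + (Lam * (matLog U).trace) • 1 :=
  becker_law_from_axioms_general T hCont hIso hSup hZero
end

section
/- Let G ≠ 0 and K ≠ 0 be real constants. For U ∈ PSym(3) define the Biot stress T = 2G · dev₃(log U) + K · tr(log U) · 1. Then the constitutive relation is explicitly invertible: exp( (1/(2G)) · dev₃(T) + (1/(9K)) · tr(T) · 1 ) = U, where exp is the matrix exponential. -/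
open Matrix

/-- The deviatoric part `dev₃(X) = X − (tr X / 3)·1` of a 3×3 matrix. -/
noncomputable def dev3 (X : Matrix (Fin 3) (Fin 3) ℝ) : Matrix (Fin 3) (Fin 3) ℝ :=
  X - (X.trace / 3) • 1

open scoped Matrix.Norms.L2Operator MatrixOrder in
theorem Matrix.PosDef.exp_cfc_log {n : Type*} [Fintype n] [DecidableEq n]
    {A : Matrix n n ℝ} (hA : A.PosDef) :
    NormedSpace.exp (hA.isHermitian.cfc Real.log) = A := by
  rw [← hA.isHermitian.cfc_eq]
  exact CFC.exp_log A hA.isStrictlyPositive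

theorem exp_matLog {U : Matrix (Fin 3) (Fin 3) ℝ} (hU : U.PosDef) :
    NormedSpace.exp (matLog U) = U := by
  rw [matLog, dif_pos hU.isHermitian]
  exact hU.exp_cfc_log

section Deviator

variable (X : Matrix (Fin 3) (Fin 3) ℝ)

theorem trace_dev3 : (dev3 X).trace = 0 := by
  simp only [dev3, trace_sub, trace_smul, trace_one, Fintype.card_fin, smul_eq_mul]
  ring

theorem dev3_smul (a : ℝ) : dev3 (a • X) = a • dev3 X := by
  simp only [dev3, trace_smul, smul_sub, smul_smul, smul_eq_mul]
  congr 2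
  ring

theorem dev3_add_smul_one (c : ℝ) : dev3 (X + c • 1) = dev3 X := by
  simp only [dev3, trace_add, trace_smul, trace_one, Fintype.card_fin, smul_eq_mul]
  module

theorem dev3_dev3 : dev3 (dev3 X) = dev3 X := by
  rw [dev3, trace_dev3, zero_div, zero_smul, sub_zero]

theorem dev3_add_trace_smul_one : dev3 X + (X.trace / 3) • 1 = X :=
  sub_add_cancel X _

end Deviator

theorem isotropic_law_inverse {G K : ℝ} (hG : G ≠ 0) (hK : K ≠ 0) (L : Matrix (Fin 3) (Fin 3) ℝ) :
    let T := (2 * G) • dev3 L + (K * L.trace) • 1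
    (1 / (2 * G)) • dev3 T + ((1 / (9 * K)) * T.trace) • (1 : Matrix (Fin 3) (Fin 3) ℝ) = L := by
  intro T
  have hdev : dev3 T = (2 * G) • dev3 L := by rw [dev3_add_smul_one, dev3_smul, dev3_dev3]
  have htr : T.trace = 3 * K * L.trace := by
    simp only [T, trace_add, trace_smul, trace_dev3, trace_one, Fintype.card_fin, smul_eq_mul]
    push_cast
    ring
  calc (1 / (2 * G)) • dev3 T + ((1 / (9 * K)) * T.trace) • 1
      = dev3 L + (L.trace / 3) • 1 := by
        rw [hdev, htr, smul_smul, one_div_mul_cancel (mul_ne_zero two_ne_zero hG), one_smul]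
        congr 2
        field_simp
        ring
    _ = L := dev3_add_trace_smul_one L

/-- For `G ≠ 0`, `K ≠ 0` and `U` positive definite, the Biot stress
`T = 2G·dev₃(log U) + K·tr(log U)·1` of Becker's law satisfies the explicit inversion
formula `exp((1/2G)·dev₃(T) + (1/9K)·tr(T)·1) = U`, where `exp` is the matrix
exponential. -/
theorem becker_law_inversion (G K : ℝ) (hG : G ≠ 0) (hK : K ≠ 0)
    (U : Matrix (Fin 3) (Fin 3) ℝ) (hU : U.PosDef) :
    let T : Matrix (Fin 3) (Fin 3) ℝ :=
      (2 * G) • dev3 (matLog U) + (K * (matLog U).trace) • 1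
    NormedSpace.exp
        ((1 / (2 * G)) • dev3 T + ((1 / (9 * K)) * T.trace) • (1 : Matrix (Fin 3) (Fin 3) ℝ))
      = U := by
  intro T
  rw [isotropic_law_inverse hG hK (matLog U), exp_matLog hU]
end

section
/- Let F be an invertible real 3×3 matrix, let U = √(FᵀF) and V = √(F·Fᵀ) be the right and left stretch tensors (the unique symmetric positive definite square roots), and let R = F·U⁻¹ be the orthogonal polar factor. Then for all G, Λ ∈ ℝ the Kirchhoff stress of Becker's law equals V times the Hencky stress: R · (2G · log(U) + Λ · tr(log U) · 1) · Fᵀ = V · (2G · log(V) + Λ · tr(log V) · 1). -/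
/-!
With `R = F U⁻¹` orthogonal, `R U Rᵀ` is a positive semidefinite square root of
`R U U Rᵀ = F Fᵀ`, so `V = R U Rᵀ` by uniqueness of such roots. Conjugation by `R` is a
⋆-algebra automorphism, hence it commutes with the continuous functional calculus,
`log V = R (log U) Rᵀ`, and it preserves traces. As the stress `S` built from `log U`
commutes with `U`, `R S Fᵀ = R (U S) Rᵀ = (R U Rᵀ)(R S Rᵀ)`, which is `V` times the
Hencky stress of `V`.
-/

open Matrix

open Unitary

theorem Unitary.continuous_conjStarAlgAut {S R : Type*} [Semiring R] [StarMul R]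
    [SMul S R] [IsScalarTower S R R] [SMulCommClass S R R] [TopologicalSpace R]
    [ContinuousMul R] (u : unitary R) : Continuous (conjStarAlgAut S R u) := by
  show Continuous fun x : R => (u : R) * x * star (u : R)
  fun_prop

section

variable {n : Type*} [Fintype n] [DecidableEq n]

theorem Matrix.trace_conjStarAlgAut {α : Type*} [CommSemiring α] [StarRing α]
    (u : unitary (Matrix n n α)) (A : Matrix n n α) :
    (conjStarAlgAut α (Matrix n n α) u A).trace = A.trace := by
  rw [conjStarAlgAut_apply, trace_mul_comm, ← Matrix.mul_assoc, Unitary.coe_star_mul_self,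
    Matrix.one_mul]

theorem Matrix.cfc_conjStarAlgAut (u : unitary (Matrix n n ℝ)) (f : ℝ → ℝ) (A : Matrix n n ℝ) :
    cfc f (conjStarAlgAut ℝ (Matrix n n ℝ) u A) = conjStarAlgAut ℝ (Matrix n n ℝ) u (cfc f A) := by
  set φ := conjStarAlgAut ℝ (Matrix n n ℝ) u
  by_cases hA : IsSelfAdjoint A
  · exact (StarAlgHomClass.map_cfc φ f A (A.finite_real_spectrum.continuousOn f)
      (continuous_conjStarAlgAut u) hA (hA.map φ)).symm
  · have hφA : ¬ IsSelfAdjoint (φ A) := fun h ↦ hA (by simpa using h.map φ.symm)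
    rw [cfc_apply_of_not_predicate A hA, cfc_apply_of_not_predicate _ hφA, map_zero]

theorem Matrix.PosDef.mul_inv_mem_orthogonalGroup {F U : Matrix n n ℝ} (hU : U.PosDef)
    (hUsq : U * U = Fᵀ * F) : F * U⁻¹ ∈ orthogonalGroup n ℝ := by
  have hUt : Uᵀ = U := by simpa using hU.isHermitian.eq
  have hdet : IsUnit U.det := (isUnit_iff_isUnit_det U).mp hU.isUnit
  rw [mem_orthogonalGroup_iff', transpose_mul, transpose_nonsing_inv, hUt]
  calc U⁻¹ * Fᵀ * (F * U⁻¹) = U⁻¹ * (U * U) * U⁻¹ := by rw [hUsq]; noncomm_ring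
    _ = (U⁻¹ * U) * (U * U⁻¹) := by noncomm_ring
    _ = 1 := by rw [nonsing_inv_mul _ hdet, mul_nonsing_inv _ hdet, Matrix.mul_one]

open scoped MatrixOrder in
theorem Matrix.PosSemidef.eq_conjStarAlgAut_of_mul_self_eq {U V : Matrix n n ℝ}
    (u : unitary (Matrix n n ℝ)) (hU : U.PosSemidef) (hV : V.PosSemidef)
    (h : V * V = conjStarAlgAut ℝ (Matrix n n ℝ) u (U * U)) :
    V = conjStarAlgAut ℝ (Matrix n n ℝ) u U := by
  refine (CFC.sq_eq_sq_iff V _ hV.nonneg (map_nonneg _ hU.nonneg)).mp ?_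
  rw [sq, sq, h, map_mul]

end

theorem matLog_eq_cfc (A : Matrix (Fin 3) (Fin 3) ℝ) : matLog A = cfc Real.log A := by
  by_cases hA : A.IsHermitian
  · rw [matLog, dif_pos hA, hA.cfc_eq]
  · rw [matLog, dif_neg hA]
    exact (cfc_apply_of_not_predicate A hA).symm

theorem matLog_conjStarAlgAut (u : unitary (Matrix (Fin 3) (Fin 3) ℝ))
    (A : Matrix (Fin 3) (Fin 3) ℝ) :
    matLog (conjStarAlgAut ℝ _ u A) = conjStarAlgAut ℝ _ u (matLog A) := by
  simp only [matLog_eq_cfc, cfc_conjStarAlgAut]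

theorem commute_self_matLog (A : Matrix (Fin 3) (Fin 3) ℝ) : Commute A (matLog A) := by
  rw [matLog_eq_cfc]
  exact ((Commute.refl A).cfc_real Real.log).symm

theorem becker_kirchhoff_eq_V_mul_hencky_general
    (F U V : Matrix (Fin 3) (Fin 3) ℝ)
    (hU : U.PosDef) (hUsq : U * U = Fᵀ * F)
    (hV : V.PosDef) (hVsq : V * V = F * Fᵀ)
    (G Lam : ℝ) :
    (F * U⁻¹) * ((2 * G) • matLog U + (Lam * (matLog U).trace) • 1) * Fᵀ
      = V * ((2 * G) • matLog V + (Lam * (matLog V).trace) • 1) := by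
  let R : unitary (Matrix (Fin 3) (Fin 3) ℝ) := ⟨F * U⁻¹, hU.mul_inv_mem_orthogonalGroup hUsq⟩
  set φ := conjStarAlgAut ℝ (Matrix (Fin 3) (Fin 3) ℝ) R
  set S := (2 * G) • matLog U + (Lam * (matLog U).trace) • 1
  have hRU : (R : Matrix (Fin 3) (Fin 3) ℝ) * U = F :=
    nonsing_inv_mul_cancel_right _ _ ((isUnit_iff_isUnit_det U).mp hU.isUnit)
  have hFt : Fᵀ = U * star (R : Matrix (Fin 3) (Fin 3) ℝ) := by
    rw [← hRU, transpose_mul, star_eq_conjTranspose, conjTranspose_eq_transpose_of_trivial,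
      show Uᵀ = U by simpa using hU.isHermitian.eq]
  have hVU : V = φ U := hU.posSemidef.eq_conjStarAlgAut_of_mul_self_eq R hV.posSemidef (by
    rw [hVsq, conjStarAlgAut_apply, ← Matrix.mul_assoc, hRU, Matrix.mul_assoc, ← hFt])
  have hSU : Commute U S :=
    ((commute_self_matLog U).smul_right _).add_right ((Commute.one_right U).smul_right _)
  change (R : Matrix (Fin 3) (Fin 3) ℝ) * S * Fᵀ = _
  calc (R : Matrix (Fin 3) (Fin 3) ℝ) * S * Fᵀ = φ (U * S) := by
        rw [hFt, hSU.eq, conjStarAlgAut_apply]; simp only [Matrix.mul_assoc]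
    _ = V * φ S := by rw [map_mul, hVU]
    _ = V * ((2 * G) • matLog V + (Lam * (matLog V).trace) • 1) := by
        simp only [S, φ, hVU, matLog_conjStarAlgAut, trace_conjStarAlgAut, map_add, map_smul,
          map_one]

/-- Let `F` be invertible, `U = √(FᵀF)` and `V = √(FFᵀ)` the right and
left stretch tensors (the unique symmetric positive definite square roots), and
`R = F·U⁻¹` the orthogonal polar factor. Then for all `G, Λ` the Kirchhoff stress of
Becker's law equals `V` times the Hencky stress:
`R·(2G·log U + Λ·tr(log U)·1)·Fᵀ = V·(2G·log V + Λ·tr(log V)·1)`. -/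
theorem becker_kirchhoff_eq_V_mul_hencky
    (F U V : Matrix (Fin 3) (Fin 3) ℝ) (hF : IsUnit F)
    (hU : U.PosDef) (hUsq : U * U = Fᵀ * F)
    (hV : V.PosDef) (hVsq : V * V = F * Fᵀ)
    (G Lam : ℝ) :
    (F * U⁻¹) * ((2 * G) • matLog U + (Lam * (matLog U).trace) • 1) * Fᵀ
      = V * ((2 * G) • matLog V + (Lam * (matLog V).trace) • 1) :=
  becker_kirchhoff_eq_V_mul_hencky_general F U V hU hUsq hV hVsq G Lam
end

section
/- Let G > 0 and Λ ∈ ℝ with 3Λ + 2G > 0. For principal stretches λ₁, λ₂, λ₃ > 0 define the principal Cauchy stresses of Becker's law by σₖ = (λₖ/(λ₁λ₂λ₃)) · ( 2G·ln(λₖ) + Λ·ln(λ₁λ₂λ₃) ). Then for the choice λ₁ = e⁻¹, λ₂ = e⁻², λ₃ = e³ one has λ₁ > λ₂ but σ₁ = −2G/e < σ₂ = −4G/e², so that (σ₁ − σ₂)·(λ₁ − λ₂) < 0; hence Becker's law violates the Baker–Ericksen inequality. -/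
/-!
For `λ₁ = e⁻¹, λ₂ = e⁻², λ₃ = e³` the deformation is isochoric (`λ₁λ₂λ₃ = 1`), so the
volumetric term drops out and `σₖ = 2G·λₖ ln λₖ`. Since `x ↦ x ln x` is decreasing on
`(0, 1/e)`, the larger stretch `λ₁` carries the smaller stress: `-2G/e < -4G/e²` is just `e > 2`.
-/

open Real

lemma exp_mul_exp_mul_exp_eq_one {a b c : ℝ} (h : a + b + c = 0) :
    exp a * exp b * exp c = 1 := by
  rw [← exp_add, ← exp_add, h, exp_zero]

lemma becker_stress_of_det_eq_one (G Λ x : ℝ) {J : ℝ} (hJ : J = 1) :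
    x / J * (2 * G * log x + Λ * log J) = 2 * G * (x * log x) := by
  subst hJ
  rw [log_one, div_one]
  ring

lemma neg_two_mul_div_lt_neg_four_mul_div_sq {G e : ℝ} (hG : 0 < G) (he : 2 < e) :
    -(2 * G) / e < -(4 * G) / e ^ 2 := by
  have he0 : 0 < e := by linarith
  rw [div_lt_div_iff₀ he0 (by positivity)]
  nlinarith [mul_pos hG he0]

theorem becker_violates_baker_ericksen_general (G Lam : ℝ) (hG : 0 < G) :
    let l1 : ℝ := Real.exp (-1)
    let l2 : ℝ := Real.exp (-2)
    let l3 : ℝ := Real.exp 3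
    let σ : ℝ → ℝ := fun lk =>
      (lk / (l1 * l2 * l3)) * (2 * G * Real.log lk + Lam * Real.log (l1 * l2 * l3))
    l2 < l1
    ∧ σ l1 = -(2 * G) / Real.exp 1
    ∧ σ l2 = -(4 * G) / (Real.exp 1) ^ 2
    ∧ σ l1 < σ l2
    ∧ (σ l1 - σ l2) * (l1 - l2) < 0 := by
  intro l1 l2 l3 σ
  have hσ : ∀ x, σ x = 2 * G * (x * log x) := fun x =>
    becker_stress_of_det_eq_one G Lam x (exp_mul_exp_mul_exp_eq_one (by norm_num))
  have hl1 : l1 = (exp 1)⁻¹ := exp_neg 1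
  have hl2 : l2 = (exp 1 ^ 2)⁻¹ := by
    rw [exp_one_pow, ← exp_neg]
    norm_num [l2]
  have hσ1 : σ l1 = -(2 * G) / exp 1 := by
    rw [hσ, log_exp, hl1]
    ring
  have hσ2 : σ l2 = -(4 * G) / exp 1 ^ 2 := by
    rw [hσ, log_exp, hl2]
    ring
  have hl : l2 < l1 := exp_lt_exp.2 (by norm_num)
  have hσlt : σ l1 < σ l2 := by
    rw [hσ1, hσ2]
    exact neg_two_mul_div_lt_neg_four_mul_div_sq hG exp_one_gt_two
  exact ⟨hl, hσ1, hσ2, hσlt, mul_neg_of_neg_of_pos (sub_neg.2 hσlt) (sub_pos.2 hl)⟩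

/-- For `G > 0` and `3Λ + 2G > 0`, the principal Cauchy stresses of
Becker's law, `σₖ = (λₖ/(λ₁λ₂λ₃))·(2G·ln λₖ + Λ·ln(λ₁λ₂λ₃))`, violate the Baker–Ericksen
inequality: for `λ₁ = e⁻¹`, `λ₂ = e⁻²`, `λ₃ = e³` one has `λ₁ > λ₂` but
`σ₁ = −2G/e < σ₂ = −4G/e²`, so `(σ₁ − σ₂)·(λ₁ − λ₂) < 0`. -/
theorem becker_violates_baker_ericksen (G Lam : ℝ) (hG : 0 < G)
    (hLam : 0 < 3 * Lam + 2 * G) :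
    let l1 : ℝ := Real.exp (-1)
    let l2 : ℝ := Real.exp (-2)
    let l3 : ℝ := Real.exp 3
    let σ : ℝ → ℝ := fun lk =>
      (lk / (l1 * l2 * l3)) * (2 * G * Real.log lk + Lam * Real.log (l1 * l2 * l3))
    l2 < l1
    ∧ σ l1 = -(2 * G) / Real.exp 1
    ∧ σ l2 = -(4 * G) / (Real.exp 1) ^ 2
    ∧ σ l1 < σ l2
    ∧ (σ l1 - σ l2) * (l1 - l2) < 0 :=
  becker_violates_baker_ericksen_general G Lam hG
end

section
/- Let G > 0 and Λ > 20G, and define T(U) = 2G·log(U) + Λ·tr(log U)·1 on PSym(3). For U₁ = diag(2, 1/4, 1) and U₂ = 1 one has the exact identity ⟨T(U₁) − T(U₂), U₁ − U₂⟩ = (ln 2 / 4)·(20G − Λ), which is strictly negative; hence Becker's law fails the Krawietz M-condition ⟨T(U₁) − T(U₂), U₁ − U₂⟩ > 0 for U₁ ≠ U₂. -/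
open Matrix Polynomial

lemma matLog_one : matLog 1 = 0 := by
  rw [matLog, dif_pos isHermitian_one, ← Matrix.IsHermitian.cfc_eq]
  simp

lemma aeval_diagonal (d : Fin 3 → ℝ) (q : ℝ[X]) :
    aeval (Matrix.diagonal d) q = Matrix.diagonal (fun i => q.eval (d i)) := by
  have h : (aeval d q : Fin 3 → ℝ) = fun i => q.eval (d i) := by
    funext i
    rw [← Polynomial.coe_aeval_eq_eval]
    exact (aeval_algHom_apply (Pi.evalAlgHom ℝ (fun _ => ℝ) i) d q).symm
  have : Matrix.diagonal d = (Matrix.diagonalAlgHom ℝ : (Fin 3 → ℝ) →ₐ[ℝ] _) d := rfl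
  rw [this, aeval_algHom_apply]
  show Matrix.diagonal (aeval d q) = _
  rw [h]

noncomputable def qlog : ℝ[X] :=
  C (4 * Real.log 2 / 7) * (X - C (1/4)) * (X - C 1)
  + C (-(32 * Real.log 2 / 21)) * (X - C 2) * (X - C 1)

lemma qlog_eval (x : ℝ) :
    qlog.eval x = (4 * Real.log 2 / 7) * (x - 1/4) * (x - 1)
      + (-(32 * Real.log 2 / 21)) * (x - 2) * (x - 1) := by
  simp [qlog]

lemma log_quarter : Real.log (1/4) = -(2 * Real.log 2) := by
  rw [one_div, Real.log_inv, show (4:ℝ) = 2^2 by norm_num, Real.log_pow]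
  push_cast; ring

lemma matLog_diag :
    matLog (Matrix.diagonal ![2, 1/4, 1]) =
      Matrix.diagonal ![Real.log 2, -(2 * Real.log 2), 0] := by
  have hH : (Matrix.diagonal ![2, 1/4, 1] : Matrix (Fin 3) (Fin 3) ℝ).IsHermitian :=
    isHermitian_diagonal _
  have hsa : IsSelfAdjoint (Matrix.diagonal ![2, 1/4, 1] : Matrix (Fin 3) (Fin 3) ℝ) := hH
  rw [matLog, dif_pos hH, ← hH.cfc_eq]
  have hcongr : cfc Real.log (Matrix.diagonal ![2, 1/4, 1] : Matrix (Fin 3) (Fin 3) ℝ)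
      = cfc qlog.eval (Matrix.diagonal ![2, 1/4, 1] : Matrix (Fin 3) (Fin 3) ℝ) := by
    apply cfc_congr
    intro x hx
    rw [spectrum_diagonal] at hx
    obtain ⟨i, rfl⟩ := hx
    fin_cases i
    · show Real.log 2 = qlog.eval 2
      rw [qlog_eval]; ring
    · show Real.log (1/4) = qlog.eval (1/4)
      rw [qlog_eval, log_quarter]; ring
    · show Real.log 1 = qlog.eval 1
      rw [qlog_eval, Real.log_one]; ring
  rw [hcongr, cfc_polynomial qlog _ hsa, aeval_diagonal]
  have hfun : (fun i => qlog.eval (![2, 1/4, 1] i)) = ![Real.log 2, -(2 * Real.log 2), 0] := by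
    funext i
    fin_cases i
    · show qlog.eval 2 = Real.log 2
      rw [qlog_eval]; ring
    · show qlog.eval (1/4) = -(2 * Real.log 2)
      rw [qlog_eval]; ring
    · show qlog.eval 1 = 0
      rw [qlog_eval]; ring
  rw [hfun]


/-- For `G > 0` and `Λ > 20G`, Becker's law
`T(U) = 2G·log U + Λ·tr(log U)·1` fails the Krawietz M-condition: with
`U₁ = diag(2, 1/4, 1)` and `U₂ = 1`, the Frobenius inner product
`⟨T(U₁) − T(U₂), U₁ − U₂⟩ = tr((U₁ − U₂)ᵀ·(T(U₁) − T(U₂)))` equals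
`(ln 2 / 4)·(20G − Λ)`, which is strictly negative. -/
theorem becker_fails_M_condition (G Lam : ℝ) (hG : 0 < G) (hLam : 20 * G < Lam) :
    let T : Matrix (Fin 3) (Fin 3) ℝ → Matrix (Fin 3) (Fin 3) ℝ :=
      fun U => (2 * G) • matLog U + (Lam * (matLog U).trace) • 1
    let U₁ : Matrix (Fin 3) (Fin 3) ℝ := Matrix.diagonal ![2, 1/4, 1]
    let U₂ : Matrix (Fin 3) (Fin 3) ℝ := 1
    ((U₁ - U₂)ᵀ * (T U₁ - T U₂)).trace = (Real.log 2 / 4) * (20 * G - Lam)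
    ∧ ((U₁ - U₂)ᵀ * (T U₁ - T U₂)).trace < 0 := by
  intro T U₁ U₂
  have hlog2 : 0 < Real.log 2 := Real.log_pos (by norm_num)
  have key : ((U₁ - U₂)ᵀ * (T U₁ - T U₂)).trace = (Real.log 2 / 4) * (20 * G - Lam) := by
    simp only [T, U₁, U₂, matLog_one, matLog_diag]
    simp [Matrix.trace, Matrix.mul_apply, Fin.sum_univ_three, Matrix.diagonal,
      Matrix.one_apply, Matrix.transpose_apply, Matrix.sub_apply, Matrix.add_apply,
      Matrix.smul_apply]
    ring
  exact ⟨key, key ▸ mul_neg_of_pos_of_neg (by positivity) (by linarith)⟩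
end

section
/- Let γ > 0, let F be the simple glide matrix with rows (1, γ, 0), (0, 1, 0), (0, 0, 1), let U = √(FᵀF) and R = F·U⁻¹. Then for all G, Λ ∈ ℝ the Cauchy stress of Becker's law is (1/det F) · R · ( 2G·log(U) + Λ·tr(log U)·1 ) · Fᵀ = 2G · ln( (γ + √(γ²+4))/2 ) · S, where S is the matrix with rows (γ, 1, 0), (1, 0, 0), (0, 0, 0). In particular the Cauchy stress is independent of Λ and the simple shear stress component is σ₁₂ = 2G·ln( (γ + √(γ²+4))/2 ). -/
/-!
The principal stretches of the glide are `1`, `λ` and `λ⁻¹` with `λ = (γ + √(γ² + 4))/2`, so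
`λ - λ⁻¹ = γ`. Hence `log` agrees on the spectrum of `U` with `x ↦ (log λ / γ) (x - x⁻¹)`, and
`log U = (log λ / γ) (U - U⁻¹)` is traceless, which removes `Λ`. Since `U² = FᵀF`, the product
`F U⁻¹ (U - U⁻¹) Fᵀ` collapses to `F Fᵀ - 1 = γ S`.
-/

open Matrix

/-- The simple glide deformation gradient with amount of shear `γ`. -/
def glide (γ : ℝ) : Matrix (Fin 3) (Fin 3) ℝ := !![1, γ, 0; 0, 1, 0; 0, 0, 1]

theorem Real.log_eq_mul_sub_inv {l x : ℝ} (hx : x ∈ ({1, l, l⁻¹} : Set ℝ)) :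
    Real.log x = Real.log l / (l - l⁻¹) * (x - x⁻¹) := by
  have hl : Real.log l = Real.log l / (l - l⁻¹) * (l - l⁻¹) := by
    refine (div_mul_cancel_of_imp fun h => ?_).symm
    have := congrArg Real.log (sub_eq_zero.mp h)
    rw [Real.log_inv] at this
    linarith
  rcases hx with rfl | rfl | rfl
  · simp
  · exact hl
  · rw [Real.log_inv, inv_inv]
    linear_combination -hl

theorem Matrix.IsHermitian.cfc_eq_smul_sub_inv {n : Type*} [Fintype n] [DecidableEq n]
    {A : Matrix n n ℝ} (hA : A.IsHermitian) (hAu : IsUnit A) {f : ℝ → ℝ} {c : ℝ}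
    (hf : ∀ x ∈ spectrum ℝ A, f x = c * (x - x⁻¹)) :
    hA.cfc f = c • (A - A⁻¹) := by
  have h0 : ∀ x ∈ spectrum ℝ A, x ≠ 0 := fun x hx h0 => spectrum.zero_notMem ℝ hAu (h0 ▸ hx)
  have hcont : ContinuousOn (fun x : ℝ => x⁻¹) (spectrum ℝ A) := continuousOn_inv₀.mono h0
  rw [← hA.cfc_eq, cfc_congr hf, cfc_const_mul c (fun x => x - x⁻¹) A (continuousOn_id.sub hcont),
    cfc_sub (fun x => x) _ _ continuousOn_id hcont, cfc_id' ℝ A, cfc_ringInverse_id A hAu,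
    nonsing_inv_eq_ringInverse]

theorem Matrix.mul_inv_mul_sub_inv_mul_transpose {n K : Type*} [Fintype n] [DecidableEq n]
    [Field K] {F U : Matrix n n K} (hF : IsUnit F.det) (hU : U * U = Fᵀ * F) :
    F * U⁻¹ * (U - U⁻¹) * Fᵀ = F * Fᵀ - 1 := by
  have hFt : IsUnit Fᵀ.det := by rwa [det_transpose]
  have hUu : IsUnit U.det := by
    have : IsUnit (U * U).det := by rw [hU, det_mul]; exact hFt.mul hF
    exact isUnit_of_mul_isUnit_left (det_mul U U ▸ this)
  have hUinv : U⁻¹ * (U - U⁻¹) = 1 - (Fᵀ * F)⁻¹ := by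
    rw [← hU, mul_inv_rev, mul_sub, nonsing_inv_mul _ hUu]
  rw [mul_assoc F, hUinv, mul_inv_rev, mul_sub, sub_mul, mul_one, ← mul_assoc F,
    mul_nonsing_inv _ hF, one_mul, nonsing_inv_mul _ hFt]

theorem glide_det (γ : ℝ) : (glide γ).det = 1 := by
  simp [glide, det_fin_three]

theorem glide_mul_transpose_sub_one (γ : ℝ) :
    glide γ * (glide γ)ᵀ - 1 = γ • !![γ, 1, 0; 1, 0, 0; 0, 0, 0] := by
  ext i j
  fin_cases i <;> fin_cases j <;> simp [glide, vecMul, dotProduct, Fin.sum_univ_three, one_apply]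

/-- The larger principal stretch of the glide; the other two are `1` and its inverse. -/
noncomputable def glideStretch (γ : ℝ) : ℝ := (γ + √(γ ^ 2 + 4)) / 2

theorem glideStretch_inv (γ : ℝ) : (glideStretch γ)⁻¹ = (√(γ ^ 2 + 4) - γ) / 2 := by
  have hs : √(γ ^ 2 + 4) ^ 2 = γ ^ 2 + 4 := Real.sq_sqrt (by positivity)
  refine inv_eq_of_mul_eq_one_right ?_
  rw [glideStretch]
  linear_combination hs / 4

theorem glideStretch_sub_inv (γ : ℝ) : glideStretch γ - (glideStretch γ)⁻¹ = γ := by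
  rw [glideStretch_inv, glideStretch]
  ring

noncomputable def glideRightStretch (γ : ℝ) : Matrix (Fin 3) (Fin 3) ℝ :=
  let s := √(γ ^ 2 + 4)
  !![2 / s, γ / s, 0; γ / s, (2 + γ ^ 2) / s, 0; 0, 0, 1]

theorem glideRightStretch_mul_self (γ : ℝ) :
    glideRightStretch γ * glideRightStretch γ = (glide γ)ᵀ * glide γ := by
  have hs : √(γ ^ 2 + 4) ^ 2 = γ ^ 2 + 4 := Real.sq_sqrt (by positivity)
  have hs0 : √(γ ^ 2 + 4) ≠ 0 := by positivity
  simp only [glideRightStretch, glide]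
  generalize √(γ ^ 2 + 4) = s at *
  ext i j
  fin_cases i <;> fin_cases j <;> simp [mul_apply, Fin.sum_univ_three] <;> field_simp <;> grind

theorem glideRightStretch_posSemidef (γ : ℝ) : (glideRightStretch γ).PosSemidef := by
  have hs0 : 0 < √(γ ^ 2 + 4) := by positivity
  refine .of_dotProduct_mulVec_nonneg ?_ fun x => ?_
  · ext i j
    fin_cases i <;> fin_cases j <;> simp [glideRightStretch]
  · simp only [glideRightStretch]
    generalize √(γ ^ 2 + 4) = s at *
    have hq : 0 ≤ (x 0 ^ 2 + (x 0 + γ * x 1) ^ 2 + 2 * x 1 ^ 2) / s + x 2 ^ 2 := by positivity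
    refine hq.trans_eq ?_
    simp only [Fin.isValue, dotProduct, Pi.star_apply, star_trivial, mulVec, of_apply, cons_val',
      cons_val_fin_one, Fin.sum_univ_three, cons_val_zero, cons_val_one, cons_val, zero_mul,
      add_zero, one_mul, zero_add]
    field_simp
    ring

theorem eq_glideRightStretch_of_mul_self_eq {γ : ℝ} {U : Matrix (Fin 3) (Fin 3) ℝ}
    (hU : U.PosSemidef) (hUsq : U * U = (glide γ)ᵀ * glide γ) : U = glideRightStretch γ := by
  open scoped MatrixOrder in
  exact (CFC.sq_eq_sq_iff U _ hU.nonneg (glideRightStretch_posSemidef γ).nonneg).mp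
    (by rw [sq, sq, hUsq, glideRightStretch_mul_self])

theorem glideRightStretch_mul_eq_one (γ : ℝ) :
    let s := √(γ ^ 2 + 4)
    glideRightStretch γ * !![(2 + γ ^ 2) / s, -γ / s, 0; -γ / s, 2 / s, 0; 0, 0, 1] = 1 := by
  have hs : √(γ ^ 2 + 4) ^ 2 = γ ^ 2 + 4 := Real.sq_sqrt (by positivity)
  have hs0 : √(γ ^ 2 + 4) ≠ 0 := by positivity
  simp only [glideRightStretch]
  generalize √(γ ^ 2 + 4) = s at *
  ext i j
  fin_cases i <;> fin_cases j <;> simp [mul_apply, Fin.sum_univ_three, one_apply] <;>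
    field_simp <;> grind

theorem isUnit_glideRightStretch (γ : ℝ) : IsUnit (glideRightStretch γ) :=
  (isUnit_iff_isUnit_det _).mpr (isUnit_det_of_right_inverse (glideRightStretch_mul_eq_one γ))

theorem trace_glideRightStretch_sub_inv (γ : ℝ) :
    (glideRightStretch γ - (glideRightStretch γ)⁻¹).trace = 0 := by
  rw [inv_eq_right_inv (glideRightStretch_mul_eq_one γ)]
  simp [glideRightStretch, trace_fin_three]

theorem spectrum_glideRightStretch_subset (γ : ℝ) :
    spectrum ℝ (glideRightStretch γ) ⊆ {1, glideStretch γ, (glideStretch γ)⁻¹} := by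
  intro x hx
  have hs : √(γ ^ 2 + 4) ^ 2 = γ ^ 2 + 4 := Real.sq_sqrt (by positivity)
  have hs0 : √(γ ^ 2 + 4) ≠ 0 := by positivity
  rw [mem_spectrum_iff_isRoot_charpoly, Polynomial.IsRoot, eval_charpoly, det_fin_three] at hx
  have hroots : (x - 1) * ((x - glideStretch γ) * (x - (glideStretch γ)⁻¹)) = 0 := by
    simp only [scalar_apply, glideRightStretch, Fin.isValue, Matrix.sub_apply, diagonal_apply_eq,
      of_apply, cons_val', cons_val_zero, cons_val_fin_one, cons_val_one, cons_val, ne_eq,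
      Fin.reduceEq, not_false_eq_true, diagonal_apply_ne, sub_self, mul_zero, sub_zero, zero_ne_one,
      zero_sub, one_ne_zero, mul_neg, neg_mul, neg_neg, add_zero, zero_mul, neg_zero] at hx
    rw [glideStretch_inv, glideStretch]
    generalize √(γ ^ 2 + 4) = s at *
    field_simp at hx
    have h : s ^ 2 * ((x - 1) * ((x - (γ + s) / 2) * (x - (s - γ) / 2))) = 0 := by
      linear_combination hx + (x - 1) * ((s ^ 2 + 4) / 4 - s * x) * hs
    simpa [hs0] using h
  simpa [sub_eq_zero, or_assoc] using hroots

theorem matLog_glideRightStretch (γ : ℝ) :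
    matLog (glideRightStretch γ) =
      (Real.log (glideStretch γ) / γ) • (glideRightStretch γ - (glideRightStretch γ)⁻¹) := by
  have hherm := (glideRightStretch_posSemidef γ).isHermitian
  rw [matLog, dif_pos hherm, hherm.cfc_eq_smul_sub_inv (isUnit_glideRightStretch γ)]
  intro x hx
  have := Real.log_eq_mul_sub_inv (spectrum_glideRightStretch_subset γ hx)
  rwa [glideStretch_sub_inv] at this

/-- For the simple glide `F = glide γ` (`γ > 0`) with right stretch
tensor `U = √(FᵀF)` and orthogonal polar factor `R = F·U⁻¹`, the Cauchy stress of
Becker's law satisfies, for all `G, Λ`: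
`(1/det F)·R·(2G·log U + Λ·tr(log U)·1)·Fᵀ = 2G·ln((γ + √(γ²+4))/2)·S`, where `S` has
rows `(γ,1,0), (1,0,0), (0,0,0)`. In particular the Cauchy stress is independent of `Λ`
and the shear stress component is `σ₁₂ = 2G·ln((γ + √(γ²+4))/2)`. -/
theorem becker_cauchy_stress_simple_glide (γ : ℝ) (hγ : 0 < γ) (G Lam : ℝ)
    (U : Matrix (Fin 3) (Fin 3) ℝ) (hU : U.PosDef)
    (hUsq : U * U = (glide γ)ᵀ * glide γ) :
    ((glide γ).det)⁻¹ •
        ((glide γ * U⁻¹) * ((2 * G) • matLog U + (Lam * (matLog U).trace) • 1) *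
          (glide γ)ᵀ)
      = (2 * G * Real.log ((γ + Real.sqrt (γ ^ 2 + 4)) / 2)) •
          !![γ, 1, 0; 1, 0, 0; 0, 0, 0] := by
  have hpolar := mul_inv_mul_sub_inv_mul_transpose (by simp [glide_det]) hUsq
  obtain rfl := eq_glideRightStretch_of_mul_self_eq hU.posSemidef hUsq
  rw [glide_det, inv_one, one_smul, matLog_glideRightStretch, trace_smul,
    trace_glideRightStretch_sub_inv, smul_zero, mul_zero, zero_smul, add_zero,
    Matrix.mul_smul, Matrix.mul_smul, Matrix.smul_mul, Matrix.smul_mul, hpolar,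
    glide_mul_transpose_sub_one, smul_smul, smul_smul, glideStretch]
  congr 1
  field_simp
end
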